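/- arXiv:2106.14471 — 8 statements merged into one kernel-verified Lean document; each statement's English description precedes it below -/
import Mathlib

section
/- For any finite set X of nonempty words, the flower automaton of X recognizes X* with multiplicities: for every word w, the number of paths from the state ω to itself labeled w equals the number of factorizations of w into words of X. -/
namespace FGSub

variable {A B Q : Type*}

/-- `l` is a factorization of the word `w` into words of `X`. -/
def Factorization (X : Set (List A)) (w : List A) (l : List (List A)) : Prop :=
  (∀ x ∈ l, x ∈ X) ∧ l.flatten = w

/-- The number of factorizations of `w` into words of `X`. -/
noncomputable def numFact (X : Set (List A)) (w : List A) : ℕ :=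
  Nat.card {l : List (List A) // Factorization X w l}

/-- The submonoid `X*` generated by `X`, as a set of words. -/
def Xstar (X : Set (List A)) : Set (List A) := {w | ∃ l, Factorization X w l}

/-- `PathOk E p w q l` : `l` is the sequence of states (excluding the last state `q`,
i.e. `l` lists the states visited at each letter-step starting at `p`) of a path
from `p` to `q` labeled `w` in the automaton with edge relation `E`. -/
def PathOk (E : Q → A → Q → Prop) : Q → List A → Q → List Q → Prop
  | p, [], q, l => p = q ∧ l = [p]
  | p, a :: w, q, l => ∃ r l', E p a r ∧ l = p :: l' ∧ PathOk E r w q l'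

/-- The number of paths from `p` to `q` labeled `w`. -/
noncomputable def numPaths (E : Q → A → Q → Prop) (p : Q) (w : List A) (q : Q) : ℕ :=
  Nat.card {l : List Q // PathOk E p w q l}

/-- The language recognized by the automaton `(E, i, t)`. -/
def Lang (E : Q → A → Q → Prop) (i t : Q) : Set (List A) := {w | ∃ l, PathOk E i w t l}

/-- The Boolean transition relation induced by the word `w`. -/
def transRel (E : Q → A → Q → Prop) (w : List A) : Q → Q → Prop :=
  fun p q => ∃ l, PathOk E p w q l

/-- Edges of the flower automaton of `X`; the state `ω` is `none`. -/
def flowerEdge (X : Set (List A)) :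
    Option (List A × List A) → A → Option (List A × List A) → Prop
  | none, a, none => [a] ∈ X
  | none, a, some (u, v) => u = [a] ∧ v ≠ [] ∧ a :: v ∈ X
  | some (u, v), a, none => v = [a] ∧ u ≠ [] ∧ u ++ [a] ∈ X
  | some (u, v), a, some (u', v') =>
      u ≠ [] ∧ v' ≠ [] ∧ v = a :: v' ∧ u' = u ++ [a] ∧ u ++ v ∈ X

/-- Valid states of the flower automaton of `X`. -/
def FlowerOk (X : Set (List A)) : Option (List A × List A) → Prop
  | none => True
  | some (u, v) => u ≠ [] ∧ v ≠ [] ∧ u ++ v ∈ X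

/-- `p` is a proper prefix of some word of `X`. -/
def ProperPrefix (X : Set (List A)) (p : List A) : Prop := ∃ x ∈ X, p <+: x ∧ p ≠ x

/-- Edges of the prefix automaton of `X`; states are proper prefixes of words of `X`,
`[]` being initial and terminal. -/
def prefixEdge (X : Set (List A)) : List A → A → List A → Prop :=
  fun p a q => (q = p ++ [a] ∧ ProperPrefix X (p ++ [a])) ∨ (q = [] ∧ p ++ [a] ∈ X)

/-- The strongly connected components of the restriction of `e` to its fixed points. -/
def scc (e : Q → Q → Prop) : Set (Set Q) :=
  {C | ∃ s, e s s ∧ C = {t | e t t ∧ e s t ∧ e t s}}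

/-- The rank of a relation: the minimal `n` such that it factors through `Fin n`. -/
noncomputable def relRank (m : Q → Q → Prop) : ℕ :=
  sInf {n | ∃ (u : Q → Fin n → Prop) (v : Fin n → Q → Prop),
    ∀ p q, m p q ↔ ∃ r, u p r ∧ v r q}

/-- `m` belongs to the group `H(e)` (the maximal subgroup of `M` with identity `e`),
with group inverse `mi`. -/
def inH (M : Set (Q → Q → Prop)) (e m mi : Q → Q → Prop) : Prop :=
  m ∈ M ∧ mi ∈ M ∧
  Relation.Comp e m = m ∧ Relation.Comp m e = m ∧
  Relation.Comp e mi = mi ∧ Relation.Comp mi e = mi ∧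
  Relation.Comp m mi = e ∧ Relation.Comp mi m = e

/-- The `H`-class of the idempotent `e` (when it is a group). -/
def Hset (M : Set (Q → Q → Prop)) (e : Q → Q → Prop) : Set (Q → Q → Prop) :=
  {m | ∃ mi, inH M e m mi}

/-- The permutation `γ_e(m)` induced by `m ∈ H(e)` (with inverse `mi`) on the strongly
connected components of fixed points of `e`. -/
def gammaRel (e m mi : Q → Q → Prop) : Set Q → Set Q → Prop :=
  fun ρ σ => ρ ∈ scc e ∧ σ ∈ scc e ∧ ∃ r ∈ ρ, ∃ s ∈ σ, m r s ∧ mi s r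

/-- Green's left divisibility in `M¹`. -/
def Ldiv (M : Set (Q → Q → Prop)) (a b : Q → Q → Prop) : Prop :=
  a = b ∨ ∃ u ∈ M, a = Relation.Comp u b

/-- Green's relation `𝓛`. -/
def Lrel (M : Set (Q → Q → Prop)) (a b : Q → Q → Prop) : Prop := Ldiv M a b ∧ Ldiv M b a

/-- Green's right divisibility in `M¹`. -/
def Rdiv (M : Set (Q → Q → Prop)) (a b : Q → Q → Prop) : Prop :=
  a = b ∨ ∃ u ∈ M, a = Relation.Comp b u

/-- Green's relation `𝓡`. -/
def Rrel (M : Set (Q → Q → Prop)) (a b : Q → Q → Prop) : Prop := Rdiv M a b ∧ Rdiv M b a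

/-- Green's relation `𝓓 = 𝓛 ∘ 𝓡`. -/
def Drel (M : Set (Q → Q → Prop)) (a b : Q → Q → Prop) : Prop :=
  ∃ c, Lrel M a c ∧ Rrel M c b


-- Auxiliary definitions and lemmas for the proof.

/-- states along reading `v` starting from `(u, v)` -/
def seg (u : List A) : List A → List (Option (List A × List A))
  | [] => []
  | a :: v => some (u, a :: v) :: seg (u ++ [a]) v

def runStates : List A → List (Option (List A × List A))
  | [] => [none]
  | a :: v => none :: seg [a] v

lemma seg_ne_none (u v : List A) : ∀ s ∈ seg u v, s ≠ none := by
  induction v generalizing u with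
  | nil => simp [seg]
  | cons a v ih =>
    intro s hs
    simp only [seg, List.mem_cons] at hs
    rcases hs with h | h
    · simp [h]
    · exact ih _ _ h

lemma seg_length (u v : List A) : (seg u v).length = v.length := by
  induction v generalizing u with
  | nil => rfl
  | cons a v ih => simp [seg, ih]

lemma pathok_head {E : Q → A → Q → Prop} {p : Q} {w : List A} {q : Q} {l : List Q}
    (h : PathOk E p w q l) : ∃ l', l = p :: l' := by
  cases w with
  | nil => exact ⟨[], h.2⟩
  | cons a w => obtain ⟨r, l', _, hl, _⟩ := h; exact ⟨l', hl⟩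

lemma prefix_append_drop {x w : List A} (h : x <+: w) : x ++ w.drop x.length = w := by
  obtain ⟨t, rfl⟩ := h; simp

lemma pathok_seg {X : Set (List A)} {u v : List A} (hu : u ≠ []) (hv : v ≠ [])
    (hx : u ++ v ∈ X) (w : List A) (m : List (Option (List A × List A))) :
    PathOk (flowerEdge X) (some (u, v)) w none m ↔
      ∃ w' m', w = v ++ w' ∧ m = seg u v ++ m' ∧ PathOk (flowerEdge X) none w' none m' := by
  induction v generalizing u w m with
  | nil => exact absurd rfl hv
  | cons a v ih =>
    cases w with
    | nil =>
      constructor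
      · rintro ⟨h, -⟩
        exact absurd h (by simp)
      · rintro ⟨w', m', hw, -, -⟩
        exact absurd hw (by simp)
    | cons b w =>
      cases v with
      | nil =>
        constructor
        · rintro ⟨r, m2, he, hm, hp⟩
          cases r with
          | none =>
            obtain ⟨hv1, -, -⟩ := he
            have hb : b = a := by simpa using hv1.symm
            subst hb
            exact ⟨w, m2, rfl, by simp [seg, hm], hp⟩
          | some uv =>
            obtain ⟨u', v'⟩ := uv
            obtain ⟨-, hv', hav, -, -⟩ := he
            exact absurd hav.symm (by simp [hv'])
        · rintro ⟨w', m', hw, hm, hp⟩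
          obtain ⟨hb, hw'⟩ : b = a ∧ w = w' := by simpa using hw
          subst hb; subst hw'
          exact ⟨none, seg (u ++ [b]) [] ++ m', ⟨rfl, hu, hx⟩, by simpa [seg] using hm, by simpa [seg] using hp⟩
      | cons c v2 =>
        constructor
        · rintro ⟨r, m2, he, hm, hp⟩
          cases r with
          | none =>
            obtain ⟨hv1, -, -⟩ := he
            exact absurd hv1 (by simp)
          | some uv =>
            obtain ⟨u', v'⟩ := uv
            obtain ⟨-, hv', hav, hu', -⟩ := he
            injection hav with hb hv2
            subst hu'; subst hb
            rw [← hv2] at hp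
            obtain ⟨w', m', hw, hm2, hp'⟩ := (ih (u := u ++ [a]) (by simp) (by simp)
              (by simpa using hx) w m2).mp hp
            exact ⟨w', m', by simp [hw], by simp [seg, hm, hm2], hp'⟩
        · rintro ⟨w', m', hw, hm, hp⟩
          simp only [List.cons_append] at hw
          injection hw with hb hw2
          subst hb
          refine ⟨some (u ++ [b], c :: v2), seg (u ++ [b]) (c :: v2) ++ m',
            ⟨hu, by simp, rfl, rfl, hx⟩, by simpa [seg] using hm, ?_⟩
          rw [hw2]
          exact (ih (u := u ++ [b]) (by simp) (by simp) (by simpa using hx) _ _).mpr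
            ⟨w', m', rfl, rfl, hp⟩

lemma path_cons_iff {X : Set (List A)} (a : A) (w' : List A)
    (m : List (Option (List A × List A))) :
    PathOk (flowerEdge X) none (a :: w') none m ↔
      ∃ x w'' m', x ∈ X ∧ x ≠ [] ∧ a :: w' = x ++ w'' ∧ m = runStates x ++ m' ∧
        PathOk (flowerEdge X) none w'' none m' := by
  constructor
  · rintro ⟨r, m2, he, hm, hp⟩
    cases r with
    | none =>
      exact ⟨[a], w', m2, he, by simp, rfl, by simp [runStates, seg, hm], hp⟩
    | some uv =>
      obtain ⟨u, v⟩ := uv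
      obtain ⟨hu, hvne, hav⟩ := he
      subst hu
      obtain ⟨w'', m', hw, hm2, hp'⟩ := (pathok_seg (by simp) hvne (by simpa using hav) w' m2).mp hp
      exact ⟨a :: v, w'', m', by simpa using hav, by simp, by simp [hw], by simp [runStates, hm, hm2], hp'⟩
  · rintro ⟨x, w'', m', hxX, hxne, hw, hm, hp⟩
    cases x with
    | nil => exact absurd rfl hxne
    | cons b v =>
      obtain ⟨hb, hw2⟩ : a = b ∧ w' = v ++ w'' := by simpa using hw
      subst hb
      cases v with
      | nil =>
        refine ⟨none, m', hxX, by simpa [runStates, seg] using hm, ?_⟩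
        rw [hw2]; simpa using hp
      | cons c v2 =>
        refine ⟨some ([a], c :: v2), seg [a] (c :: v2) ++ m',
          ⟨rfl, by simp, hxX⟩, by simpa [runStates] using hm, ?_⟩
        rw [hw2]
        exact (pathok_seg (by simp) (by simp) (by simpa using hxX) _ _).mpr ⟨w'', m', rfl, rfl, hp⟩


lemma nonefree_append_inj {St : Type*} : ∀ (s t l m : List (Option St)),
    (∀ x ∈ s, x ≠ none) → (∀ x ∈ t, x ≠ none) →
    s ++ none :: l = t ++ none :: m → s = t ∧ l = m := by
  intro s
  induction s with
  | nil =>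
    intro t l m _ ht h
    cases t with
    | nil => simpa using h
    | cons x t' =>
      exfalso
      apply ht x (by simp)
      have : (none : Option St) = x := by
        simpa using congrArg (fun z => List.headI z) h
      exact this.symm
  | cons x s' ih =>
    intro t l m hs ht h
    cases t with
    | nil =>
      exfalso
      apply hs x (by simp)
      have : x = (none : Option St) := by
        simpa using congrArg (fun z => List.headI z) h
      exact this
    | cons y t' =>
      simp only [List.cons_append] at h
      injection h with h1 h2
      obtain ⟨e1, e2⟩ := ih t' l m (fun z hz => hs z (by simp [hz]))
        (fun z hz => ht z (by simp [hz])) h2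
      exact ⟨by rw [h1, e1], e2⟩

lemma prefix_eq_of_length {x y z : List A} (hx : x <+: z) (hy : y <+: z)
    (h : x.length = y.length) : x = y := by
  obtain ⟨t1, e1⟩ := hx
  obtain ⟨t2, e2⟩ := hy
  exact List.append_inj_left (e1.trans e2.symm) h

lemma fact_bij (X : Set (List A)) (a : A) (w' : List A) :
    Nonempty ((Σ x : {x : List A // x ∈ X ∧ x <+: a :: w'},
        {l // Factorization X ((a :: w').drop x.1.length) l}) ≃
      {l // Factorization X (a :: w') l}) := by
  refine ⟨Equiv.ofBijective (fun p => ⟨p.1.1 :: p.2.1, fun y hy => by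
      rcases List.mem_cons.mp hy with h | h
      · exact h ▸ p.1.2.1
      · exact p.2.2.1 y h, by
      simp only [List.flatten_cons, p.2.2.2]
      exact prefix_append_drop p.1.2.2⟩) ⟨?_, ?_⟩⟩
  · rintro ⟨⟨x, hx⟩, ⟨l, hl⟩⟩ ⟨⟨y, hy⟩, ⟨m, hm⟩⟩ h
    have h' : x :: l = y :: m := congrArg Subtype.val h
    injection h' with h1 h2
    subst h1; subst h2
    rfl
  · rintro ⟨m, hm, hfl⟩
    cases m with
    | nil => exact absurd hfl (by simp)
    | cons x l =>
      have hx : x ∈ X := hm x (by simp)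
      have hpre : x <+: a :: w' := ⟨l.flatten, by simpa using hfl⟩
      refine ⟨⟨⟨x, hx, hpre⟩, ⟨l, fun y hy => hm y (List.mem_cons_of_mem _ hy), ?_⟩⟩, rfl⟩
      show l.flatten = (a :: w').drop x.length
      rw [← hfl]
      simp

lemma path_bij (X : Set (List A)) (hX : ∀ x ∈ X, x ≠ []) (a : A) (w' : List A) :
    Nonempty ((Σ x : {x : List A // x ∈ X ∧ x <+: a :: w'},
        {l // PathOk (flowerEdge X) none ((a :: w').drop x.1.length) none l}) ≃
      {l // PathOk (flowerEdge X) none (a :: w') none l}) := by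
  refine ⟨Equiv.ofBijective (fun p => ⟨runStates p.1.1 ++ p.2.1,
      (path_cons_iff a w' _).mpr ⟨p.1.1, _, p.2.1, p.1.2.1, hX _ p.1.2.1,
        (prefix_append_drop p.1.2.2).symm, rfl, p.2.2⟩⟩) ⟨?_, ?_⟩⟩
  · rintro ⟨⟨x, hxX, hxp⟩, ⟨l, hl⟩⟩ ⟨⟨y, hyX, hyp⟩, ⟨m, hm⟩⟩ h
    have h' : runStates x ++ l = runStates y ++ m := congrArg Subtype.val h
    obtain ⟨l', rfl⟩ := pathok_head hl
    obtain ⟨m', rfl⟩ := pathok_head hm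
    cases x with
    | nil => exact absurd rfl (hX _ hxX)
    | cons b v =>
    cases y with
    | nil => exact absurd rfl (hX _ hyX)
    | cons c v2 =>
    simp only [runStates, List.cons_append] at h'
    injection h' with _ h2
    obtain ⟨hseg, hlm⟩ := nonefree_append_inj _ _ _ _ (seg_ne_none _ _) (seg_ne_none _ _) h2
    have hlen : (b :: v).length = (c :: v2).length := by
      have := congrArg List.length hseg
      simp only [seg_length] at this
      simp [this]
    have hxy : b :: v = c :: v2 := prefix_eq_of_length hxp hyp hlen
    injection hxy with e1 e2
    subst e1; subst e2; subst hlm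
    rfl
  · rintro ⟨m, hm⟩
    obtain ⟨x, w'', m', hxX, hxne, hw, hme, hp⟩ := (path_cons_iff a w' m).mp hm
    have hpre : x <+: a :: w' := ⟨w'', hw.symm⟩
    have hd : (a :: w').drop x.length = w'' := by rw [hw]; simp
    refine ⟨⟨⟨x, hxX, hpre⟩, ⟨m', ?_⟩⟩, ?_⟩
    · rw [hd]; exact hp
    · exact Subtype.ext hme.symm

lemma base_equiv (X : Set (List A)) (hX : ∀ x ∈ X, x ≠ []) :
    Nonempty ({l // PathOk (flowerEdge X) none ([] : List A) none l} ≃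
      {l // Factorization X [] l}) := by
  refine ⟨Equiv.ofBijective (fun _ => ⟨[], fun x hx => absurd hx (by simp), rfl⟩) ⟨?_, ?_⟩⟩
  · rintro ⟨l, hl⟩ ⟨m, hm⟩ -
    obtain ⟨-, rfl⟩ := hl
    obtain ⟨-, rfl⟩ := hm
    rfl
  · rintro ⟨m, hm1, hm2⟩
    refine ⟨⟨[none], rfl, rfl⟩, Subtype.ext ?_⟩
    cases m with
    | nil => rfl
    | cons x t =>
      exfalso
      have hx : x = [] := (List.append_eq_nil_iff.mp hm2).1
      exact hX x (hm1 x (by simp)) hx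

lemma main_equiv (X : Finset (List A)) (hX : ∀ x ∈ X, x ≠ []) :
    ∀ (n : ℕ) (w : List A), w.length ≤ n →
      Nonempty ({l // PathOk (flowerEdge (↑X : Set (List A))) none w none l} ≃
        {l // Factorization (↑X : Set (List A)) w l}) := by
  have hX' : ∀ x ∈ (↑X : Set (List A)), x ≠ [] := fun x hx => hX x (by exact_mod_cast hx)
  intro n
  induction n with
  | zero =>
    intro w hw
    cases w with
    | nil => exact base_equiv _ hX'
    | cons a w' => simp at hw
  | succ n ih =>
    intro w hw
    cases w with
    | nil => exact base_equiv _ hX'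
    | cons a w' =>
      obtain ⟨ep⟩ := path_bij (↑X : Set (List A)) hX' a w'
      obtain ⟨ef⟩ := fact_bij (↑X : Set (List A)) a w'
      refine ⟨ep.symm.trans ((Equiv.sigmaCongrRight (fun x => ?_)).trans ef)⟩
      have hxne : x.1 ≠ [] := hX' x.1 x.2.1
      have hlen : ((a :: w').drop x.1.length).length ≤ n := by
        have h1 : 1 ≤ x.1.length := by
          cases hx1 : x.1 with
          | nil => exact absurd hx1 hxne
          | cons _ _ => simp
        simp only [List.length_drop, List.length_cons] at *
        omega
      exact (ih _ hlen).some


/-- the flower automaton of a finite set `X` of nonempty words recognizes `X*`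
with multiplicities: the number of paths from `ω` to `ω` labeled `w` is the number of
factorizations of `w` into words of `X`. -/
theorem flower_recognizes_with_multiplicities {A : Type*}
    (X : Finset (List A)) (hX : ∀ x ∈ X, x ≠ []) (w : List A) :
    numPaths (flowerEdge (↑X : Set (List A))) none w none = numFact (↑X) w := by
  exact Nat.card_congr ((main_equiv X hX w.length w le_rfl).some)
end FGSub
end

section
/- Let e be an idempotent binary relation on a finite set Q and let S be its set of fixed points. Then for all p,q ∈ Q, (p,q) ∈ e if and only if there exists s ∈ S with (p,s) ∈ e and (s,q) ∈ e. -/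
namespace FGSub

variable {A B Q : Type*}

/-- for an idempotent relation `e` on a finite set `Q`, `(p,q) ∈ e` iff there is
a fixed point `s` of `e` with `(p,s) ∈ e` and `(s,q) ∈ e`. -/
theorem idempotent_through_fixed_point {Q : Type*} [Finite Q]
    (e : Q → Q → Prop) (he : Relation.Comp e e = e) (p q : Q) :
    e p q ↔ ∃ s, e s s ∧ e p s ∧ e s q := by
  have trans : ∀ {a b c : Q}, e a b → e b c → e a c := by
    intro a b c h1 h2
    rw [← he]; exact ⟨b, h1, h2⟩
  constructor
  · intro hpq
    have split : ∀ a : {a : Q // e a q}, ∃ r : {a : Q // e a q}, e a.1 r.1 := by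
      rintro ⟨a, ha⟩
      rw [← he] at ha
      obtain ⟨r, h1, h2⟩ := ha
      exact ⟨⟨r, h2⟩, h1⟩
    choose step hstep using split
    set g : ℕ → {a : Q // e a q} := fun n => step^[n] ⟨p, hpq⟩ with hg
    have hsucc : ∀ n, e (g n).1 (g (n+1)).1 := by
      intro n
      have : g (n+1) = step (g n) := Function.iterate_succ_apply' step n _
      rw [this]; exact hstep _
    have hchain' : ∀ i k, e (g i).1 (g (i+k+1)).1 := by
      intro i k
      induction k with
      | zero => exact hsucc i
      | succ k ih => exact trans ih (hsucc (i+k+1))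
    have hchain : ∀ i j, i < j → e (g i).1 (g j).1 := by
      intro i j hij
      obtain ⟨k, rfl⟩ : ∃ k, j = i + k + 1 := ⟨j - i - 1, by omega⟩
      exact hchain' i k
    have : ¬ Function.Injective g := by
      intro hinj
      exact (Finite.exists_ne_map_eq_of_infinite g).elim fun a ⟨b, hne, heq⟩ => hne (hinj heq)
    obtain ⟨i, j, hgij, hne⟩ := Function.not_injective_iff.mp this
    rcases Nat.lt_or_ge i j with hij | hij
    · have hss : e (g i).1 (g i).1 := by
        have := hchain i j hij; rwa [← hgij] at this
      refine ⟨(g i).1, hss, ?_, (g i).2⟩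
      rcases Nat.eq_zero_or_pos i with h | h
      · subst h; exact hss
      · exact hchain 0 i h
    · have hji : j < i := lt_of_le_of_ne hij (Ne.symm hne)
      have hss : e (g j).1 (g j).1 := by
        have := hchain j i hji; rwa [hgij] at this
      refine ⟨(g j).1, hss, ?_, (g j).2⟩
      rcases Nat.eq_zero_or_pos j with h | h
      · subst h; exact hss
      · exact hchain 0 j h
  · rintro ⟨s, _, h1, h2⟩
    exact trans h1 h2
end FGSub
end

section
/- Every idempotent binary relation on a nonempty finite set, other than the empty relation, has at least one fixed point. -/
namespace FGSub

variable {A B Q : Type*}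

/-- every nonempty idempotent relation on a finite set has a fixed point. -/
theorem idempotent_has_fixed_point {Q : Type*} [Finite Q]
    (e : Q → Q → Prop) (he : Relation.Comp e e = e) (hne : ∃ p q, e p q) :
    ∃ s, e s s := by
  classical
  obtain ⟨p, q, hpq⟩ := hne
  have htrans : ∀ a b c, e a b → e b c → e a c := fun a b c h1 h2 =>
    he ▸ (⟨b, h1, h2⟩ : Relation.Comp e e a c)
  have hsplit : ∀ x, e x q → ∃ r, e x r ∧ e r q := by
    intro x hx
    have : Relation.Comp e e x q := by rw [he]; exact hx
    exact this
  let step : {x : Q // e x q} → {x : Q // e x q} := fun x =>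
    ⟨(hsplit x.1 x.2).choose, (hsplit x.1 x.2).choose_spec.2⟩
  have hstep : ∀ x, e x.1 (step x).1 := fun x => (hsplit x.1 x.2).choose_spec.1
  let f : ℕ → {x : Q // e x q} := fun n => step^[n] ⟨p, hpq⟩
  have hf : ∀ n, e (f n).1 (f (n + 1)).1 := by
    intro n
    have : f (n + 1) = step (f n) := Function.iterate_succ_apply' step n _
    rw [this]
    exact hstep (f n)
  have hchain : ∀ i j, i < j → e (f i).1 (f j).1 := by
    intro i j hij
    induction j with
    | zero => omega
    | succ j ih =>
      rcases Nat.lt_succ_iff_lt_or_eq.mp hij with h | h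
      · exact htrans _ _ _ (ih h) (hf j)
      · subst h; exact hf i
  obtain ⟨m, n, hmn, heq⟩ := Finite.exists_ne_map_eq_of_infinite f
  rcases hmn.lt_or_gt with h | h
  · exact ⟨(f m).1, heq ▸ hchain m n h⟩
  · exact ⟨(f n).1, heq ▸ hchain n m h⟩
end FGSub
end

section
/- Let e be an idempotent relation on a finite set Q, S its set of fixed points, and Γ the set of strongly connected components of the restriction of e to S. Define ℓ ⊆ Q×Γ by (p,σ) ∈ ℓ iff (p,s) ∈ e for some s ∈ σ, and r ⊆ Γ×Q by (σ,q) ∈ r iff (s,q) ∈ e for some s ∈ σ. Then e = ℓ∘r (the column-row decomposition). -/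
namespace FGSub

variable {A B Q : Type*}

/-- The "column" relation `ℓ ⊆ Q × Γ` of the column-row decomposition. -/
def colRel (e : Q → Q → Prop) : Q → Set Q → Prop :=
  fun p σ => σ ∈ scc e ∧ ∃ s ∈ σ, e p s

/-- The "row" relation `r ⊆ Γ × Q` of the column-row decomposition. -/
def rowRel (e : Q → Q → Prop) : Set Q → Q → Prop :=
  fun σ q => σ ∈ scc e ∧ ∃ s ∈ σ, e s q

/-- the column-row decomposition `e = ℓ ∘ r` of an idempotent relation on a
finite set. -/
theorem column_row_decomposition {Q : Type*} [Finite Q]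
    (e : Q → Q → Prop) (he : Relation.Comp e e = e) :
    e = Relation.Comp (colRel e) (rowRel e) := by
  have trans : ∀ a b c, e a b → e b c → e a c := by
    intro a b c hab hbc
    rw [← he]; exact ⟨b, hab, hbc⟩
  have split : ∀ a b, e a b → ∃ m, e a m ∧ e m b := by
    intro a b h; rw [← he] at h; exact h
  funext p q
  apply propext
  constructor
  · intro hpq
    choose f hf1 hf2 using fun (a : {a // e a q}) => split a q a.2
    set g : {a // e a q} → {a // e a q} := fun a => ⟨f a, hf2 a⟩ with hg
    set x : ℕ → {a // e a q} := fun n => g^[n] ⟨p, hpq⟩ with hxdef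
    have hx : ∀ n, e (x n) (x (n + 1)) := by
      intro n
      have h1 : x (n + 1) = g (x n) := Function.iterate_succ_apply' g n _
      rw [h1]; exact hf1 (x n)
    have hchain : ∀ j i, i < j → e (x i) (x j) := by
      intro j
      induction j with
      | zero => omega
      | succ j ih =>
        intro i hij
        rcases Nat.lt_succ_iff_lt_or_eq.1 hij with h | h
        · exact trans _ _ _ (ih i h) (hx j)
        · subst h; exact hx i
    have key : ∀ s : Q, e s s → e p s → e s q →
        Relation.Comp (colRel e) (rowRel e) p q := by
      intro s hss hps hsq
      refine ⟨{t | e t t ∧ e s t ∧ e t s}, ⟨⟨s, hss, rfl⟩, s, ⟨hss, hss, hss⟩, hps⟩,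
        ⟨⟨s, hss, rfl⟩, s, ⟨hss, hss, hss⟩, hsq⟩⟩
    obtain ⟨i, j, hne, heq⟩ := Finite.exists_ne_map_eq_of_infinite x
    have main : ∀ i j, i < j → x i = x j →
        Relation.Comp (colRel e) (rowRel e) p q := by
      intro i j hij hxeq
      have hss : e (x i) (x i) := by
        have h1 := hchain j i hij
        rw [← hxeq] at h1; exact h1
      have hps : e p (x i) := by
        rcases Nat.eq_zero_or_pos i with h0 | h0
        · subst h0; exact hss
        · exact hchain i 0 h0
      exact key (x i) hss hps (x i).2
    rcases hne.lt_or_gt with h | h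
    · exact main i j h heq
    · exact main j i h heq.symm
  · rintro ⟨σ, ⟨hσ, s, hs, hps⟩, ⟨-, s', hs', hsq⟩⟩
    obtain ⟨t0, ht0, rfl⟩ := hσ
    have hss' : e s s' := trans _ _ _ hs.2.2 hs'.2.1
    exact trans _ _ _ (trans _ _ _ hps hss') hsq
end FGSub
end

section
/- Let M be a monoid of binary relations on a finite set Q and e ∈ M idempotent with set Γ of strongly connected components of fixed points. For m in the maximal subgroup H(e) containing e, define γ_e(m) ⊆ Γ×Γ by (ρ,σ) ∈ γ_e(m) iff there exist r ∈ ρ, s ∈ σ with (r,s) ∈ m and (s,r) ∈ m⁻¹, where m⁻¹ is the group inverse of m in H(e). Then m ↦ γ_e(m) is an injective group homomorphism from H(e) into the symmetric group on Γ. -/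
namespace FGSub

variable {A B Q : Type*}

section GammaHelpers

variable {Q : Type*}

/-- The scc class of a point. -/
def cls (e : Q → Q → Prop) (s : Q) : Set Q := {t | e t t ∧ e s t ∧ e t s}

lemma etrans {e : Q → Q → Prop} (he : Relation.Comp e e = e) {a b c : Q}
    (h1 : e a b) (h2 : e b c) : e a c := by
  rw [← he]; exact ⟨b, h1, h2⟩

lemma cls_mem_scc {e : Q → Q → Prop} {s : Q} (hs : e s s) : cls e s ∈ scc e :=
  ⟨s, hs, rfl⟩

lemma mem_cls_self {e : Q → Q → Prop} {s : Q} (hs : e s s) : s ∈ cls e s :=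
  ⟨hs, hs, hs⟩

lemma cls_eq_of_mem {e : Q → Q → Prop} (he : Relation.Comp e e = e) {s x : Q}
    (hx : x ∈ cls e s) : cls e s = cls e x := by
  obtain ⟨hxx, hsx, hxs⟩ := hx
  ext t
  exact ⟨fun ⟨htt, hst, hts⟩ => ⟨htt, etrans he hxs hst, etrans he hts hsx⟩,
    fun ⟨htt, hxt, htx⟩ => ⟨htt, etrans he hsx hxt, etrans he htx hxs⟩⟩

lemma scc_rep {e : Q → Q → Prop} (he : Relation.Comp e e = e) {ρ : Set Q} {x : Q}
    (hρ : ρ ∈ scc e) (hx : x ∈ ρ) : ρ = cls e x := by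
  obtain ⟨s, hs, rfl⟩ := hρ
  exact cls_eq_of_mem he hx

lemma scc_pair {e : Q → Q → Prop} (he : Relation.Comp e e = e) {ρ : Set Q} {x y : Q}
    (hρ : ρ ∈ scc e) (hx : x ∈ ρ) (hy : y ∈ ρ) : e x y := by
  rw [scc_rep he hρ hx] at hy
  exact hy.2.1

/-- In a finite set, an idempotent relation admits a "fixed point splitting". -/
lemma idem_split [Finite Q] {e : Q → Q → Prop} (he : Relation.Comp e e = e)
    {p q : Q} (h : e p q) : ∃ r, e p r ∧ e r r ∧ e r q := by
  -- chains of arbitrary length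
  have chain : ∀ n (p q : Q), e p q →
      ∃ c : ℕ → Q, c 0 = p ∧ c (n+1) = q ∧ ∀ i ≤ n, e (c i) (c (i+1)) := by
    intro n
    induction n with
    | zero =>
      intro p q h
      refine ⟨fun i => if i = 0 then p else q, by simp, by simp, ?_⟩
      intro i hi
      interval_cases i
      simpa using h
    | succ n ih =>
      intro p q h
      rw [← he] at h
      obtain ⟨a, hpa, haq⟩ := h
      obtain ⟨c, hc0, hcn, hce⟩ := ih p a hpa
      refine ⟨fun i => if i ≤ n+1 then c i else q, by simpa, by simp, ?_⟩
      intro i hi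
      rcases Nat.lt_or_ge i (n+1) with h1 | h1
      · simp only [if_pos (by omega : i ≤ n+1), if_pos (by omega : i+1 ≤ n+1)]
        exact hce i (by omega)
      · have hieq : i = n+1 := by omega
        subst hieq
        simp only [if_pos le_rfl, if_neg (by omega : ¬ (n+1+1 ≤ n+1))]
        rw [hcn]; exact haq
  obtain ⟨c, hc0, hcn, hce⟩ := chain (Nat.card Q) p q h
  have ctrans : ∀ j i, i < j → j ≤ Nat.card Q + 1 → e (c i) (c j) := by
    intro j
    induction j with
    | zero => omega
    | succ j ihj =>
      intro i hij hj
      rcases Nat.lt_or_ge i j with h1 | h1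
      · exact etrans he (ihj i h1 (by omega)) (hce j (by omega))
      · have : i = j := by omega
        subst this
        exact hce i (by omega)
  have := Fintype.ofFinite Q
  obtain ⟨i, j, hij, hcij⟩ :=
    Fintype.exists_ne_map_eq_of_card_lt (fun i : Fin (Nat.card Q + 2) => c i)
      (by simp [Nat.card_eq_fintype_card])
  -- arrange i < j
  have key : ∀ i j : Fin (Nat.card Q + 2), (i : ℕ) < (j : ℕ) → c i = c j →
      ∃ r, e p r ∧ e r r ∧ e r q := by
    intro i j hlt hcij
    refine ⟨c i, ?_, ?_, ?_⟩
    · rw [← hc0, hcij]; exact ctrans j 0 (by omega) (by omega)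
    · have h2 := ctrans j i hlt (by omega)
      rw [hcij] at h2
      rw [hcij]
      exact h2
    · rw [← hcn]; exact ctrans (Nat.card Q + 1) i (by omega) le_rfl
  rcases lt_trichotomy (i : ℕ) (j : ℕ) with h1 | h1 | h1
  · exact key i j h1 hcij
  · exact absurd (Fin.ext h1) hij
  · exact key j i h1 hcij.symm

lemma gammaRel_swap {e m mi : Q → Q → Prop} {ρ σ : Set Q}
    (h : gammaRel e m mi ρ σ) : gammaRel e mi m σ ρ := by
  obtain ⟨h1, h2, r, hr, s, hs, ha, hb⟩ := h
  exact ⟨h2, h1, s, hs, r, hr, hb, ha⟩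

end GammaHelpers

/-- for `M` a monoid of relations on a finite set `Q` and `e ∈ M` idempotent,
`m ↦ γ_e(m)` is an injective group homomorphism from `H(e)` into the symmetric group on the
set `Γ` of strongly connected components of fixed points of `e`: each `γ_e(m)` is a
permutation of `Γ`, `γ_e` is multiplicative, and it is injective. -/
theorem gamma_injective_hom {Q : Type*} [Finite Q]
    (M : Set (Q → Q → Prop))
    (hM : ∀ m ∈ M, ∀ n ∈ M, Relation.Comp m n ∈ M)
    (e : Q → Q → Prop) (heM : e ∈ M) (he : Relation.Comp e e = e) :
    (∀ m mi, inH M e m mi →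
      (∀ ρ ∈ scc e, ∃! σ, gammaRel e m mi ρ σ) ∧
      (∀ σ ∈ scc e, ∃! ρ, gammaRel e m mi ρ σ)) ∧
    (∀ m mi n ni, inH M e m mi → inH M e n ni →
      ∀ ρ τ : Set Q,
        gammaRel e (Relation.Comp m n) (Relation.Comp ni mi) ρ τ ↔
          ∃ σ, gammaRel e m mi ρ σ ∧ gammaRel e n ni σ τ) ∧
    (∀ m mi n ni, inH M e m mi → inH M e n ni →
      gammaRel e m mi = gammaRel e n ni → m = n) := by
  -- Part 1a: unique image
  have exu : ∀ m mi, inH M e m mi → ∀ ρ ∈ scc e, ∃! σ, gammaRel e m mi ρ σ := by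
    intro m mi hm ρ hρ
    obtain ⟨hmM, hmiM, hem, hme, hemi, hmie, hmmi, hmim⟩ := hm
    obtain ⟨r0, hr0, rfl⟩ := hρ
    obtain ⟨s, hms, hmis⟩ : ∃ s, m r0 s ∧ mi s r0 := by
      rw [← hmmi] at hr0; exact hr0
    have hr0' : e r0 r0 := by rw [← hmmi]; exact ⟨s, hms, hmis⟩
    have hss : e s s := by rw [← hmim]; exact ⟨r0, hmis, hms⟩
    refine ⟨cls e s, ⟨cls_mem_scc hr0', cls_mem_scc hss, r0, mem_cls_self hr0',
      s, mem_cls_self hss, hms, hmis⟩, ?_⟩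
    intro σ' hσ'
    obtain ⟨_, hσ'scc, r1, hr1, s1, hs1, hms1, hmis1⟩ := hσ'
    have her : e r1 r0 := hr1.2.2
    have her' : e r0 r1 := hr1.2.1
    have h1 : e s s1 := by
      rw [← hmim]
      exact ⟨r1, (by rw [← hmie]; exact ⟨r0, hmis, her'⟩), hms1⟩
    have h2 : e s1 s := by
      rw [← hmim]
      exact ⟨r0, (by rw [← hmie]; exact ⟨r1, hmis1, her⟩), hms⟩
    have hs1' : s1 ∈ cls e s := ⟨etrans he h2 h1, h1, h2⟩
    rw [scc_rep he hσ'scc hs1]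
    exact (cls_eq_of_mem he hs1').symm
  -- injectivity (one inclusion)
  have main : ∀ m mi n ni, inH M e m mi → inH M e n ni →
      gammaRel e m mi = gammaRel e n ni → ∀ p q, m p q → n p q := by
    intro m mi n ni hm hn hEq p q hpq
    obtain ⟨hmM, hmiM, hem, hme, hemi, hmie, hmmi, hmim⟩ := hm
    obtain ⟨hnM, hniM, hen, hne, heni, hnie, hnni, hnin⟩ := hn
    rw [← hem] at hpq
    obtain ⟨a, hpa, hmaq⟩ := hpq
    obtain ⟨r, hpr, hrr, hra⟩ := idem_split he hpa
    have hmrq : m r q := by rw [← hem]; exact ⟨a, hra, hmaq⟩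
    rw [← hme] at hmrq
    obtain ⟨b, hmrb, hbq⟩ := hmrq
    obtain ⟨s', hbs', hs's', hs'q⟩ := idem_split he hbq
    have hmrs' : m r s' := by rw [← hme]; exact ⟨b, hmrb, hbs'⟩
    obtain ⟨s, hmrs, hmisr⟩ : ∃ s, m r s ∧ mi s r := by
      rw [← hmmi] at hrr; exact hrr
    have hrr' : e r r := by rw [← hmmi]; exact ⟨s, hmrs, hmisr⟩
    have hss : e s s := by rw [← hmim]; exact ⟨r, hmisr, hmrs⟩
    have hg : gammaRel e m mi (cls e r) (cls e s) :=
      ⟨cls_mem_scc hrr', cls_mem_scc hss, r, mem_cls_self hrr',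
        s, mem_cls_self hss, hmrs, hmisr⟩
    rw [hEq] at hg
    obtain ⟨_, _, r', hr', s'', hs'', hnr's'', hnis''⟩ := hg
    have hnrs'' : n r s'' := by rw [← hen]; exact ⟨r', hr'.2.1, hnr's''⟩
    have hnrs : n r s := by rw [← hne]; exact ⟨s'', hnrs'', hs''.2.2⟩
    have hess' : e s s' := by rw [← hmim]; exact ⟨r, hmisr, hmrs'⟩
    have hesq : e s q := etrans he hess' hs'q
    have hnps : n p s := by rw [← hen]; exact ⟨r, hpr, hnrs⟩
    rw [← hne]; exact ⟨s, hnps, hesq⟩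
  refine ⟨?_, ?_, ?_⟩
  · intro m mi hm
    refine ⟨exu m mi hm, ?_⟩
    intro σ hσ
    have hm' : inH M e mi m := by
      obtain ⟨hmM, hmiM, hem, hme, hemi, hmie, hmmi, hmim⟩ := hm
      exact ⟨hmiM, hmM, hemi, hmie, hem, hme, hmim, hmmi⟩
    obtain ⟨ρ, hρ1, hρu⟩ := exu mi m hm' σ hσ
    exact ⟨ρ, gammaRel_swap hρ1, fun y hy => hρu y (gammaRel_swap hy)⟩
  · intro m mi n ni hm hn ρ τ
    obtain ⟨hmM, hmiM, hem, hme, hemi, hmie, hmmi, hmim⟩ := hm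
    obtain ⟨hnM, hniM, hen, hne, heni, hnie, hnni, hnin⟩ := hn
    constructor
    · rintro ⟨hρ, hτ, r, hr, t, ht, hmn, hnimi⟩
      obtain ⟨s, hms, hnst⟩ := hmn
      obtain ⟨s', hnits', hmis'r⟩ := hnimi
      have hss' : e s s' := by rw [← hnni]; exact ⟨t, hnst, hnits'⟩
      have hs's : e s' s := by rw [← hmim]; exact ⟨r, hmis'r, hms⟩
      have hss : e s s := etrans he hss' hs's
      refine ⟨cls e s, ⟨hρ, cls_mem_scc hss, r, hr, s, mem_cls_self hss, hms, ?_⟩,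
        ⟨cls_mem_scc hss, hτ, s, mem_cls_self hss, t, ht, hnst, ?_⟩⟩
      · rw [← hemi]; exact ⟨s', hss', hmis'r⟩
      · rw [← hnie]; exact ⟨s', hnits', hs's⟩
    · rintro ⟨σ, ⟨hρ, hσ, r, hr, s, hs, hms, hmis⟩, ⟨_, hτ, s', hs', t, ht, hns't, hnits'⟩⟩
      have hss' : e s s' := scc_pair he hσ hs hs'
      have hs's : e s' s := scc_pair he hσ hs' hs
      refine ⟨hρ, hτ, r, hr, t, ht, ⟨s', ?_, hns't⟩, ⟨s', hnits', ?_⟩⟩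
      · rw [← hme]; exact ⟨s, hms, hss'⟩
      · rw [← hemi]; exact ⟨s, hs's, hmis⟩
  · intro m mi n ni hm hn hEq
    funext p q
    exact propext ⟨main m mi n ni hm hn hEq p q, main n ni m mi hn hm hEq.symm p q⟩
end FGSub
end

section
/- Let M be a monoid of relations on a finite set Q, e ∈ M idempotent, and s,t fixed points of e in distinct strongly connected components. If (s,t) ∈ e, then (t,s) ∉ m for every m ∈ H(e). -/
namespace FGSub

variable {A B Q : Type*}

/-- Powers `m^n ∘ e` (aux). -/
def pwAux (e m : Q → Q → Prop) : ℕ → (Q → Q → Prop)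
  | 0 => e
  | n + 1 => Relation.Comp m (pwAux e m n)

/-- Powers `e ∘ mi^n` (aux). -/
def qwAux (e mi : Q → Q → Prop) : ℕ → (Q → Q → Prop)
  | 0 => e
  | n + 1 => Relation.Comp (qwAux e mi n) mi

lemma pwAux_e_comp {e m : Q → Q → Prop} (he : Relation.Comp e e = e)
    (hem : Relation.Comp e m = m) (n : ℕ) :
    Relation.Comp e (pwAux e m n) = pwAux e m n := by
  cases n with
  | zero => exact he
  | succ n =>
    show Relation.Comp e (Relation.Comp m (pwAux e m n)) = Relation.Comp m (pwAux e m n)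
    rw [← Relation.comp_assoc, hem]

lemma qw_pw {e m mi : Q → Q → Prop} (he : Relation.Comp e e = e)
    (hem : Relation.Comp e m = m) (hmim : Relation.Comp mi m = e) (n : ℕ) :
    Relation.Comp (qwAux e mi n) (pwAux e m n) = e := by
  induction n with
  | zero => exact he
  | succ n ih =>
    show Relation.Comp (Relation.Comp (qwAux e mi n) mi) (Relation.Comp m (pwAux e m n)) = e
    rw [Relation.comp_assoc, ← Relation.comp_assoc (r := mi) (p := m), hmim,
      pwAux_e_comp he hem, ih]

lemma pwAux_add {e m : Q → Q → Prop} (he : Relation.Comp e e = e)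
    (hem : Relation.Comp e m = m) (a b : ℕ) :
    pwAux e m (a + b) = Relation.Comp (pwAux e m a) (pwAux e m b) := by
  induction a with
  | zero =>
    simp only [Nat.zero_add]
    exact (pwAux_e_comp he hem b).symm
  | succ a ih =>
    have h1 : a + 1 + b = (a + b) + 1 := by omega
    rw [h1]
    show Relation.Comp m (pwAux e m (a + b))
        = Relation.Comp (Relation.Comp m (pwAux e m a)) (pwAux e m b)
    rw [ih, Relation.comp_assoc]

/-- if `s,t` are fixed points of the idempotent `e` lying in distinct strongly
connected components and `(s,t) ∈ e`, then `(t,s) ∉ m` for every `m ∈ H(e)`. -/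
theorem not_mem_H_of_e_cross {Q : Type*} [Finite Q]
    (M : Set (Q → Q → Prop))
    (hM : ∀ m ∈ M, ∀ n ∈ M, Relation.Comp m n ∈ M)
    (e : Q → Q → Prop) (heM : e ∈ M) (he : Relation.Comp e e = e)
    (s t : Q) (hs : e s s) (ht : e t t)
    (hdist : ¬ (e s t ∧ e t s)) (hst : e s t) :
    ∀ m mi, inH M e m mi → ¬ m t s := by
  rintro m mi ⟨hmM, hmiM, hem, hme, hemi, hmie, hmmi, hmim⟩ hmts
  -- m s s holds
  have hmss : m s s := by
    rw [← hem]; exact ⟨t, hst, hmts⟩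
  -- pwAux n s s for all n
  have hpss : ∀ n, pwAux e m n s s := by
    intro n
    induction n with
    | zero => exact hs
    | succ n ih => exact ⟨s, hmss, ih⟩
  -- powers are not injective
  obtain ⟨i0, j0, hne, hij0⟩ := Finite.exists_ne_map_eq_of_infinite (pwAux e m)
  obtain ⟨i, j, hlt, hij⟩ : ∃ i j, i < j ∧ pwAux e m i = pwAux e m j := by
    rcases lt_or_gt_of_ne hne with h | h
    · exact ⟨i0, j0, h, hij0⟩
    · exact ⟨j0, i0, h, hij0.symm⟩
  set d := j - i with hd
  have hdpos : 0 < d := Nat.sub_pos_of_lt hlt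
  have hjd : j = i + d := by omega
  have hed : e = pwAux e m d := by
    have h1 := qw_pw (m := m) (mi := mi) he hem hmim i
    calc e = Relation.Comp (qwAux e mi i) (pwAux e m i) := h1.symm
    _ = Relation.Comp (qwAux e mi i) (pwAux e m j) := by rw [hij]
    _ = Relation.Comp (qwAux e mi i)
          (Relation.Comp (pwAux e m i) (pwAux e m d)) := by
        rw [hjd, pwAux_add he hem]
    _ = Relation.Comp (Relation.Comp (qwAux e mi i) (pwAux e m i))
          (pwAux e m d) := Relation.comp_assoc.symm
    _ = Relation.Comp e (pwAux e m d) := by rw [h1]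
    _ = pwAux e m d := pwAux_e_comp he hem d
  -- e t s follows
  have hets : e t s := by
    rw [hed]
    obtain ⟨d', hd'⟩ : ∃ d', d = d' + 1 := ⟨d - 1, by omega⟩
    rw [hd']
    exact ⟨s, hmts, hpss d'⟩
  exact hdist ⟨hst, hets⟩
end FGSub
end

section
/- Let M be a monoid of relations on a finite set Q, e,e' ∈ M idempotents that are 𝒟-equivalent. Then the permutation groups G_e = γ_e(H(e)) and G_{e'} = γ_{e'}(H(e')) are equivalent (isomorphic as permutation groups via a bijection between the sets of strongly connected components of fixed points). -/
namespace FGSub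

variable {A B Q : Type*}

section KeyAux

variable {Q : Type*}

lemma scc_fix {e : Q → Q → Prop} {ρ : Set Q} (hρ : ρ ∈ scc e) {r : Q} (hr : r ∈ ρ) :
    e r r := by
  obtain ⟨s, hs, rfl⟩ := hρ; exact hr.1

/-- The candidate bijection between scc's. -/
def theta (c k : Q → Q → Prop) (ρ : Set Q) : Set Q := {t | ∃ r ∈ ρ, k r t ∧ c t r}

/-- The conjugation data relating two idempotents. -/
structure Conj (e e' c k : Q → Q → Prop) : Prop where
  hee : Relation.Comp e e = e
  he'e' : Relation.Comp e' e' = e'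
  hkc : Relation.Comp k c = e
  hck : Relation.Comp c k = e'
  hek : Relation.Comp e k = k
  hke' : Relation.Comp k e' = k
  he'c : Relation.Comp e' c = c
  hce : Relation.Comp c e = c

lemma Conj.symm {e e' c k : Q → Q → Prop} (h : Conj e e' c k) : Conj e' e k c :=
  ⟨h.he'e', h.hee, h.hck, h.hkc, h.he'c, h.hce, h.hek, h.hke'⟩

lemma theta_mem_scc {e e' c k : Q → Q → Prop} (h : Conj e e' c k) {ρ : Set Q}
    (hρ : ρ ∈ scc e) : theta c k ρ ∈ scc e' := by
  obtain ⟨s, hs, rfl⟩ := hρ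
  have hs' : Relation.Comp k c s s := by rw [h.hkc]; exact hs
  obtain ⟨t0, hkst0, hct0s⟩ := hs'
  refine ⟨t0, ?_, ?_⟩
  · rw [← h.hck]; exact ⟨s, hct0s, hkst0⟩
  · ext t
    constructor
    · rintro ⟨r, hrρ, hkrt, hctr⟩
      have hct0r : c t0 r := by
        have : Relation.Comp c e t0 r := ⟨s, hct0s, hrρ.2.1⟩
        rwa [h.hce] at this
      have hkrt0 : k r t0 := by
        have : Relation.Comp e k r t0 := ⟨s, hrρ.2.2, hkst0⟩
        rwa [h.hek] at this
      refine ⟨?_, ?_, ?_⟩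
      · rw [← h.hck]; exact ⟨r, hctr, hkrt⟩
      · rw [← h.hck]; exact ⟨r, hct0r, hkrt⟩
      · rw [← h.hck]; exact ⟨r, hctr, hkrt0⟩
    · rintro ⟨htt, ht0t, htt0⟩
      rw [← h.hck] at htt
      obtain ⟨r', hctr', hkr't⟩ := htt
      have hct0r' : c t0 r' := by
        have : Relation.Comp e' c t0 r' := ⟨t, ht0t, hctr'⟩
        rwa [h.he'c] at this
      have hkr't0 : k r' t0 := by
        have : Relation.Comp k e' r' t0 := ⟨t, hkr't, htt0⟩
        rwa [h.hke'] at this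
      refine ⟨r', ⟨?_, ?_, ?_⟩, hkr't, hctr'⟩
      · rw [← h.hkc]; exact ⟨t, hkr't, hctr'⟩
      · rw [← h.hkc]; exact ⟨t0, hkst0, hct0r'⟩
      · rw [← h.hkc]; exact ⟨t0, hkr't0, hct0s⟩

lemma theta_theta {e e' c k : Q → Q → Prop} (h : Conj e e' c k) {ρ : Set Q}
    (hρ : ρ ∈ scc e) : theta k c (theta c k ρ) = ρ := by
  obtain ⟨s, hs, rfl⟩ := hρ
  ext r'
  constructor
  · rintro ⟨t, ⟨r, hrρ, hkrt, hctr⟩, hctr', hkr't⟩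
    have h1 : e r r' := by rw [← h.hkc]; exact ⟨t, hkrt, hctr'⟩
    have h2 : e r' r := by rw [← h.hkc]; exact ⟨t, hkr't, hctr⟩
    have h3 : e r' r' := by rw [← h.hkc]; exact ⟨t, hkr't, hctr'⟩
    refine ⟨h3, ?_, ?_⟩
    · have : Relation.Comp e e s r' := ⟨r, hrρ.2.1, h1⟩
      rwa [h.hee] at this
    · have : Relation.Comp e e r' s := ⟨r, h2, hrρ.2.2⟩
      rwa [h.hee] at this
  · intro hr'
    have herr : Relation.Comp k c r' r' := by rw [h.hkc]; exact hr'.1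
    obtain ⟨t, hk, hc⟩ := herr
    exact ⟨t, ⟨r', hr', hk, hc⟩, hc, hk⟩

lemma inH_map {M : Set (Q → Q → Prop)} (hM : ∀ m ∈ M, ∀ n ∈ M, Relation.Comp m n ∈ M)
    {e e' c k : Q → Q → Prop} (h : Conj e e' c k) (hcM : c ∈ M) (hkM : k ∈ M)
    {m mi : Q → Q → Prop} (hm : inH M e m mi) :
    inH M e' (Relation.Comp (Relation.Comp c m) k) (Relation.Comp (Relation.Comp c mi) k) := by
  obtain ⟨hmM, hmiM, hem, hme, hemi, hmie, hmmi, hmim⟩ := hm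
  have left : ∀ x : Q → Q → Prop, Relation.Comp e' (Relation.Comp (Relation.Comp c x) k)
      = Relation.Comp (Relation.Comp c x) k := by
    intro x
    rw [← Relation.comp_assoc (r := e') (p := Relation.Comp c x) (q := k),
      ← Relation.comp_assoc (r := e') (p := c) (q := x), h.he'c]
  have right : ∀ x : Q → Q → Prop, Relation.Comp (Relation.Comp (Relation.Comp c x) k) e'
      = Relation.Comp (Relation.Comp c x) k := by
    intro x
    rw [Relation.comp_assoc (r := Relation.Comp c x) (p := k) (q := e'), h.hke']
  have prod : ∀ x y : Q → Q → Prop, Relation.Comp e y = y → Relation.Comp x y = e →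
      Relation.Comp (Relation.Comp (Relation.Comp c x) k) (Relation.Comp (Relation.Comp c y) k)
        = e' := by
    intro x y hey hxy
    calc Relation.Comp (Relation.Comp (Relation.Comp c x) k)
          (Relation.Comp (Relation.Comp c y) k)
        = Relation.Comp (Relation.Comp c x)
          (Relation.Comp (Relation.Comp k (Relation.Comp c y)) k) := by
          rw [Relation.comp_assoc (r := Relation.Comp c x) (p := k)
            (q := Relation.Comp (Relation.Comp c y) k),
            ← Relation.comp_assoc (r := k) (p := Relation.Comp c y) (q := k)]
      _ = Relation.Comp (Relation.Comp c x) (Relation.Comp y k) := by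
          rw [← Relation.comp_assoc (r := k) (p := c) (q := y), h.hkc, hey]
      _ = Relation.Comp c (Relation.Comp (Relation.Comp x y) k) := by
          rw [Relation.comp_assoc (r := c) (p := x) (q := Relation.Comp y k),
            ← Relation.comp_assoc (r := x) (p := y) (q := k)]
      _ = e' := by rw [hxy, h.hek, h.hck]
  exact ⟨hM _ (hM _ hcM _ hmM) _ hkM, hM _ (hM _ hcM _ hmiM) _ hkM,
    left m, right m, left mi, right mi, prod m mi hemi hmmi, prod mi m hem hmim⟩

lemma phi_hom {e e' c k : Q → Q → Prop} (h : Conj e e' c k) {m n : Q → Q → Prop}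
    (hen : Relation.Comp e n = n) :
    Relation.Comp (Relation.Comp c (Relation.Comp m n)) k
      = Relation.Comp (Relation.Comp (Relation.Comp c m) k)
          (Relation.Comp (Relation.Comp c n) k) := by
  symm
  calc Relation.Comp (Relation.Comp (Relation.Comp c m) k)
        (Relation.Comp (Relation.Comp c n) k)
      = Relation.Comp (Relation.Comp c m)
        (Relation.Comp (Relation.Comp k (Relation.Comp c n)) k) := by
        rw [Relation.comp_assoc (r := Relation.Comp c m) (p := k)
          (q := Relation.Comp (Relation.Comp c n) k),
          ← Relation.comp_assoc (r := k) (p := Relation.Comp c n) (q := k)]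
    _ = Relation.Comp (Relation.Comp c m) (Relation.Comp n k) := by
        rw [← Relation.comp_assoc (r := k) (p := c) (q := n), h.hkc, hen]
    _ = Relation.Comp (Relation.Comp c (Relation.Comp m n)) k := by
        rw [Relation.comp_assoc (r := c) (p := m) (q := Relation.Comp n k),
          ← Relation.comp_assoc (r := m) (p := n) (q := k),
          ← Relation.comp_assoc (r := c) (p := Relation.Comp m n) (q := k)]

lemma psi_phi {e e' c k : Q → Q → Prop} (h : Conj e e' c k) {m : Q → Q → Prop}
    (hem : Relation.Comp e m = m) (hme : Relation.Comp m e = m) :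
    Relation.Comp (Relation.Comp k (Relation.Comp (Relation.Comp c m) k)) c = m := by
  rw [← Relation.comp_assoc (r := k) (p := Relation.Comp c m) (q := k),
    Relation.comp_assoc (r := Relation.Comp k (Relation.Comp c m)) (p := k) (q := c),
    h.hkc, ← Relation.comp_assoc (r := k) (p := c) (q := m), h.hkc, hem, hme]

lemma gamma_map {e e' c k : Q → Q → Prop} (h : Conj e e' c k) {m mi : Q → Q → Prop}
    {ρ σ : Set Q} (hg : gammaRel e m mi ρ σ) :
    gammaRel e' (Relation.Comp (Relation.Comp c m) k) (Relation.Comp (Relation.Comp c mi) k)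
      (theta c k ρ) (theta c k σ) := by
  obtain ⟨hρ, hσ, r, hrρ, s, hsσ, hmrs, hmisr⟩ := hg
  have herr : Relation.Comp k c r r := by rw [h.hkc]; exact scc_fix hρ hrρ
  have hess : Relation.Comp k c s s := by rw [h.hkc]; exact scc_fix hσ hsσ
  obtain ⟨t, hkrt, hctr⟩ := herr
  obtain ⟨t', hkst', hct's⟩ := hess
  exact ⟨theta_mem_scc h hρ, theta_mem_scc h hσ, t, ⟨r, hrρ, hkrt, hctr⟩,
    t', ⟨s, hsσ, hkst', hct's⟩, ⟨s, ⟨r, hctr, hmrs⟩, hkst'⟩, ⟨r, ⟨s, hct's, hmisr⟩, hkrt⟩⟩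

end KeyAux

/-- if `e, e'` are `𝓓`-equivalent idempotents of a monoid `M` of relations on a
finite set, then the permutation groups `G_e` and `G_{e'}` are equivalent: there is a bijection
`θ` between the sets of strongly connected components of fixed points and a group isomorphism
`Φ : H(e) → H(e')` intertwining the actions. -/
theorem equiv_permutation_groups_of_D_equiv {Q : Type*} [Finite Q]
    (M : Set (Q → Q → Prop))
    (hM : ∀ m ∈ M, ∀ n ∈ M, Relation.Comp m n ∈ M)
    (e e' : Q → Q → Prop) (heM : e ∈ M) (he'M : e' ∈ M)
    (he : Relation.Comp e e = e) (he' : Relation.Comp e' e' = e')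
    (hD : ∃ c ∈ M, Lrel M e c ∧ Rrel M c e') :
    ∃ θ : Set Q → Set Q, Set.BijOn θ (scc e) (scc e') ∧
      ∃ Φ : (Q → Q → Prop) → (Q → Q → Prop),
        Set.BijOn Φ (Hset M e) (Hset M e') ∧
        (∀ m ∈ Hset M e, ∀ n ∈ Hset M e,
          Φ (Relation.Comp m n) = Relation.Comp (Φ m) (Φ n)) ∧
        (∀ m mi, inH M e m mi →
          inH M e' (Φ m) (Φ mi) ∧
          ∀ ρ ∈ scc e, ∀ σ ∈ scc e,
            (gammaRel e m mi ρ σ ↔ gammaRel e' (Φ m) (Φ mi) (θ ρ) (θ σ))) := by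
  obtain ⟨c, hcM, ⟨hLec, hLce⟩, ⟨hRce', hRe'c⟩⟩ := hD
  obtain ⟨u, huM, hu⟩ : ∃ u ∈ M, e = Relation.Comp u c := by
    rcases hLec with h1 | ⟨u, huM, hu⟩
    · exact ⟨e, heM, by rw [← h1, he]⟩
    · exact ⟨u, huM, hu⟩
  have hce : Relation.Comp c e = c := by
    rcases hLce with h1 | ⟨v, hvM, hv⟩
    · rw [h1, he]
    · rw [hv, Relation.comp_assoc, he]
  obtain ⟨w, hwM, hw⟩ : ∃ w ∈ M, e' = Relation.Comp c w := by
    rcases hRe'c with h1 | ⟨w, hwM, hw⟩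
    · refine ⟨e', he'M, ?_⟩
      rw [h1] at he' ⊢
      exact he'.symm
    · exact ⟨w, hwM, hw⟩
  have he'c : Relation.Comp e' c = c := by
    rcases hRce' with h1 | ⟨v, hvM, hv⟩
    · rw [h1, he']
    · rw [hv, ← Relation.comp_assoc, he']
  obtain ⟨k, hkdef⟩ : ∃ k, k = Relation.Comp (Relation.Comp e u) e' := ⟨_, rfl⟩
  have hkM : k ∈ M := by rw [hkdef]; exact hM _ (hM _ heM _ huM) _ he'M
  have hkc : Relation.Comp k c = e := by
    rw [hkdef, Relation.comp_assoc (r := Relation.Comp e u) (p := e') (q := c), he'c,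
      Relation.comp_assoc (r := e) (p := u) (q := c), ← hu, he]
  have hck : Relation.Comp c k = e' := by
    rw [hkdef, ← Relation.comp_assoc (r := c) (p := Relation.Comp e u) (q := e'),
      ← Relation.comp_assoc (r := c) (p := e) (q := u), hce, hw,
      ← Relation.comp_assoc (r := Relation.Comp c u) (p := c) (q := w),
      Relation.comp_assoc (r := c) (p := u) (q := c), ← hu, hce]
  have hek : Relation.Comp e k = k := by
    rw [hkdef, ← Relation.comp_assoc (r := e) (p := Relation.Comp e u) (q := e'),
      ← Relation.comp_assoc (r := e) (p := e) (q := u), he]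
  have hke' : Relation.Comp k e' = k := by
    rw [hkdef, Relation.comp_assoc (r := Relation.Comp e u) (p := e') (q := e'), he']
  have hconj : Conj e e' c k := ⟨he, he', hkc, hck, hek, hke', he'c, hce⟩
  refine ⟨theta c k, ?_, fun m => Relation.Comp (Relation.Comp c m) k, ?_, ?_, ?_⟩
  · exact Set.InvOn.bijOn
      ⟨fun ρ hρ => theta_theta hconj hρ, fun σ hσ => theta_theta hconj.symm hσ⟩
      (fun ρ hρ => theta_mem_scc hconj hρ) (fun σ hσ => theta_mem_scc hconj.symm hσ)
  · refine Set.InvOn.bijOn (f' := fun m => Relation.Comp (Relation.Comp k m) c) ⟨?_, ?_⟩ ?_ ?_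
    · rintro m ⟨mi, hm⟩
      exact psi_phi hconj hm.2.2.1 hm.2.2.2.1
    · rintro m' ⟨mi', hm'⟩
      exact psi_phi hconj.symm hm'.2.2.1 hm'.2.2.2.1
    · rintro m ⟨mi, hm⟩
      exact ⟨_, inH_map hM hconj hcM hkM hm⟩
    · rintro m' ⟨mi', hm'⟩
      exact ⟨_, inH_map hM hconj.symm hkM hcM hm'⟩
  · rintro m ⟨mi, hm⟩ n ⟨ni, hn⟩
    exact phi_hom hconj hn.2.2.1
  · intro m mi hm
    refine ⟨inH_map hM hconj hcM hkM hm, ?_⟩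
    intro ρ hρ σ hσ
    constructor
    · exact fun hg => gamma_map hconj hg
    · intro hg
      have h2 := gamma_map hconj.symm hg
      rwa [psi_phi hconj hm.2.2.1 hm.2.2.2.1, psi_phi hconj hm.2.2.2.2.1 hm.2.2.2.2.2.1,
        theta_theta hconj hρ, theta_theta hconj hσ] at h2
end FGSub
end

section
/- Let X = Y ∘ Z be a trim decomposition of a finite set X of words. If X is a code and Y is complete, then Z is a code. -/
namespace FGSub

variable {A B Q : Type*}

section ListAux

variable {B : Type*}

lemma cutA : ∀ (l : List (List B)) (a T : List B), l.flatten = a ++ T →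
    ∃ s l₂, l₂ <:+ l ∧ T = s ++ l₂.flatten ∧ (s = [] ∨ ∃ y ∈ l, s <:+ y) := by
  intro l
  induction l with
  | nil =>
    intro a T h
    refine ⟨T, [], List.suffix_refl _, by simp, ?_⟩
    simp only [List.flatten_nil] at h
    obtain ⟨-, rfl⟩ := List.append_eq_nil_iff.mp h.symm
    exact Or.inl rfl
  | cons y t ih =>
    intro a T h
    simp only [List.flatten_cons] at h
    by_cases hl : y.length ≤ a.length
    · have hy : y <+: a := by
        have h1 : y <+: a ++ T := ⟨t.flatten, h⟩
        exact List.prefix_of_prefix_length_le h1 (List.prefix_append a T) hl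
      obtain ⟨a₂, rfl⟩ := hy
      have h2 : t.flatten = a₂ ++ T := by
        rw [List.append_assoc] at h
        exact (List.append_cancel_left h)
      obtain ⟨s, l₂, hsuf, hT, hs⟩ := ih a₂ T h2
      exact ⟨s, l₂, hsuf.trans (List.suffix_cons y t), hT,
        hs.imp id (fun ⟨y', hy', h⟩ => ⟨y', List.mem_cons_of_mem _ hy', h⟩)⟩
    · push_neg at hl
      have hy : a <+: y := by
        have h1 : a <+: y ++ t.flatten := ⟨T, h.symm⟩
        exact List.prefix_of_prefix_length_le h1 (List.prefix_append y t.flatten) hl.le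
      obtain ⟨s, rfl⟩ := hy
      refine ⟨s, t, List.suffix_cons _ _, ?_, Or.inr ⟨a ++ s, List.mem_cons_self,
        List.suffix_append a s⟩⟩
      rw [List.append_assoc] at h
      exact (List.append_cancel_left h).symm

lemma cutB : ∀ (l : List (List B)) (T' b : List B), l.flatten = T' ++ b →
    ∃ l₁ p, l₁ <+: l ∧ T' = l₁.flatten ++ p ∧ (p = [] ∨ ∃ y ∈ l, p <+: y) := by
  intro l
  induction l with
  | nil =>
    intro T' b h
    simp only [List.flatten_nil] at h
    obtain ⟨rfl, -⟩ := List.append_eq_nil_iff.mp h.symm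
    exact ⟨[], [], List.prefix_refl _, rfl, Or.inl rfl⟩
  | cons y t ih =>
    intro T' b h
    simp only [List.flatten_cons] at h
    by_cases hl : y.length ≤ T'.length
    · have hy : y <+: T' := by
        have h1 : y <+: T' ++ b := ⟨t.flatten, h⟩
        exact List.prefix_of_prefix_length_le h1 (List.prefix_append _ _) hl
      obtain ⟨T₂, rfl⟩ := hy
      have h2 : t.flatten = T₂ ++ b := by
        rw [List.append_assoc] at h
        exact List.append_cancel_left h
      obtain ⟨l₁, p, hpre, hT, hp⟩ := ih T₂ b h2
      obtain ⟨r, hr⟩ := hpre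
      refine ⟨y :: l₁, p, ⟨r, by simp [hr]⟩, by simp [hT], hp.imp id
        (fun ⟨y', hy', h⟩ => ⟨y', List.mem_cons_of_mem _ hy', h⟩)⟩
    · push_neg at hl
      have hy : T' <+: y := by
        have h1 : T' <+: y ++ t.flatten := ⟨b, h.symm⟩
        exact List.prefix_of_prefix_length_le h1 (List.prefix_append _ _) hl.le
      exact ⟨[], T', ⟨y :: t, rfl⟩, by simp, Or.inr ⟨y, List.mem_cons_self, hy⟩⟩

lemma cut {L : ℕ} (l : List (List B)) (hlen : ∀ x ∈ l, x.length ≤ L)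
    (a W b : List B) (h : l.flatten = a ++ W ++ b) (hW : 2 * L + 1 ≤ W.length) :
    ∃ s l' p, l' <:+: l ∧ W = s ++ l'.flatten ++ p ∧ s.length ≤ L ∧ p.length ≤ L := by
  have h1 : l.flatten = a ++ (W ++ b) := by rw [h, List.append_assoc]
  obtain ⟨s, l₂, hsuf, hT, hs⟩ := cutA l a (W ++ b) h1
  have hsL : s.length ≤ L := by
    rcases hs with rfl | ⟨y, hy, hsy⟩
    · simp
    · exact le_trans (List.IsSuffix.length_le hsy) (hlen y hy)
  have hsW : s <+: W := by
    have h2 : s <+: W ++ b := ⟨l₂.flatten, hT.symm⟩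
    refine List.prefix_of_prefix_length_le h2 (List.prefix_append _ _) ?_
    omega
  obtain ⟨W₂, rfl⟩ := hsW
  have h3 : l₂.flatten = W₂ ++ b := by
    rw [List.append_assoc] at hT
    exact (List.append_cancel_left hT).symm
  obtain ⟨l₁, p, hpre, hT2, hp⟩ := cutB l₂ W₂ b h3
  have hpL : p.length ≤ L := by
    rcases hp with rfl | ⟨y, hy, hpy⟩
    · simp
    · exact le_trans (List.IsPrefix.length_le hpy)
        (hlen y (hsuf.subset hy))
  exact ⟨s, l₁, p, (hpre.isInfix).trans hsuf.isInfix, by rw [hT2, List.append_assoc], hsL, hpL⟩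

lemma first_diff {b c : B} (hbc : b ≠ c) (P Q T W : List B) (R1 R2 S1 S2 : List B)
    (hT1 : T = P ++ c :: R1) (hT2 : T = Q ++ c :: R2)
    (hW1 : W = P ++ b :: S1) (hW2 : W = Q ++ b :: S2) : P.length = Q.length := by
  by_contra hne
  rcases Nat.lt_or_ge P.length Q.length with h | h
  · have e1 : T[P.length]? = some c := by
      rw [hT1, List.getElem?_append_right (le_refl _)]; simp
    have e2 : T[P.length]? = Q[P.length]? := by
      rw [hT2, List.getElem?_append_left h]
    have e3 : W[P.length]? = some b := by
      rw [hW1, List.getElem?_append_right (le_refl _)]; simp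
    have e4 : W[P.length]? = Q[P.length]? := by
      rw [hW2, List.getElem?_append_left h]
    rw [e2] at e1; rw [e4] at e3; rw [e1] at e3
    exact hbc (Option.some_injective _ e3.symm)
  · have h' : Q.length < P.length := lt_of_le_of_ne h (Ne.symm (fun hx => hne hx))
    have e1 : T[Q.length]? = some c := by
      rw [hT2, List.getElem?_append_right (le_refl _)]; simp
    have e2 : T[Q.length]? = P[Q.length]? := by
      rw [hT1, List.getElem?_append_left h']
    have e3 : W[Q.length]? = some b := by
      rw [hW2, List.getElem?_append_right (le_refl _)]; simp
    have e4 : W[Q.length]? = P[Q.length]? := by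
      rw [hW1, List.getElem?_append_left h']
    rw [e2] at e1; rw [e4] at e3; rw [e1] at e3
    exact hbc (Option.some_injective _ e3.symm)

end ListAux

section Helpers

variable {A B : Type*}

lemma bf_flatten (β : B → List A) : ∀ (l : List (List B)),
    ((l.flatten).map β).flatten = (l.map (fun y => (y.map β).flatten)).flatten := by
  intro l
  induction l with
  | nil => simp
  | cons y t ih =>
    simp only [List.flatten_cons, List.map_append, List.flatten_append, List.map_cons, ih]

lemma length_le_length_flatten : ∀ (l : List (List B)), (∀ z ∈ l, z ≠ ([]:List B)) →
    l.length ≤ l.flatten.length := by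
  intro l
  induction l with
  | nil => simp
  | cons y t ih =>
    intro h
    have hy : y ≠ [] := h y (List.mem_cons_self)
    have h1 : 1 ≤ y.length := List.length_pos_iff.mpr hy
    have := ih (fun z hz => h z (List.mem_cons_of_mem _ hz))
    simp only [List.flatten_cons, List.length_cons, List.length_append]
    omega

lemma map_injOn_list {γ : Type*} (f : List B → γ) (P : List B → Prop)
    (hinj : ∀ s, P s → ∀ t, P t → f s = f t → s = t) :
    ∀ l l' : List (List B), (∀ s ∈ l, P s) → (∀ s ∈ l', P s) → l.map f = l'.map f → l = l' := by
  intro l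
  induction l with
  | nil => intro l' _ _ h; cases l' <;> simp_all
  | cons s t ih =>
    intro l' hl hl' h
    cases l' with
    | nil => simp at h
    | cons s' t' =>
      simp only [List.map_cons, List.cons.injEq] at h
      have hs := hinj s (hl s (List.mem_cons_self)) s' (hl' s' (List.mem_cons_self)) h.1
      have ht := ih t' (fun z hz => hl z (List.mem_cons_of_mem _ hz))
        (fun z hz => hl' z (List.mem_cons_of_mem _ hz)) h.2
      rw [hs, ht]

end Helpers

section Count

variable {B : Type*} [Fintype B] [DecidableEq B]

/-- the finset of all words of length `j`. -/
def Wn (B : Type*) [Fintype B] [DecidableEq B] (j : ℕ) : Finset (List B) :=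
  Finset.image List.ofFn (Finset.univ : Finset (Fin j → B))

lemma mem_Wn {j : ℕ} {W : List B} : W ∈ Wn B j ↔ W.length = j := by
  constructor
  · intro h
    obtain ⟨f, -, rfl⟩ := Finset.mem_image.mp h
    simp
  · intro h
    subst h
    exact Finset.mem_image.mpr ⟨fun i => W[(i : ℕ)], Finset.mem_univ _, List.ofFn_getElem⟩

lemma card_Wn (j : ℕ) : (Wn B j).card = (Fintype.card B)^j := by
  rw [Wn, Finset.card_image_of_injective _ List.ofFn_injective]
  simp

lemma sum_Wn_pow (j : ℕ) :
    ∑ W ∈ Wn B j, ((Fintype.card B : ℚ)⁻¹)^W.length = ((Fintype.card B : ℚ)⁻¹ * Fintype.card B)^j := by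
  have : ∀ W ∈ Wn B j, ((Fintype.card B : ℚ)⁻¹)^W.length = ((Fintype.card B : ℚ)⁻¹)^j := by
    intro W hW; rw [mem_Wn.mp hW]
  rw [Finset.sum_congr rfl this, Finset.sum_const, card_Wn, nsmul_eq_mul, mul_pow]
  push_cast
  ring

/-- McMillan's inequality for a finite code. -/
lemma mcmillan [Nonempty B] (C : Finset (List B)) (hnil : ∀ y ∈ C, y ≠ [])
    (hcode : ∀ l₁ l₂ : List (List B), (∀ z ∈ l₁, z ∈ C) → (∀ z ∈ l₂, z ∈ C) →
      l₁.flatten = l₂.flatten → l₁ = l₂) :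
    ∑ y ∈ C, ((Fintype.card B : ℚ)⁻¹)^y.length ≤ 1 := by
  set k := Fintype.card B with hkdef
  have hk : 1 ≤ k := Fintype.card_pos
  set x : ℚ := (k : ℚ)⁻¹ with hxdef
  have hkQ : (0:ℚ) < (k:ℚ) := by exact_mod_cast hk
  have hx0 : 0 < x := by positivity
  have hkx : x * (k:ℚ) = 1 := inv_mul_cancel₀ (ne_of_gt hkQ)
  set S := ∑ y ∈ C, x^y.length with hSdef
  set Lc := C.sup List.length with hLdef
  have key : ∀ n : ℕ, S^n ≤ (n:ℚ) * Lc + 1 := by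
    intro n
    have e1 : S^n = ∑ f ∈ Fintype.piFinset (fun _ : Fin n => C), ∏ i, x^((f i).length) := by
      rw [← Finset.prod_univ_sum (fun _ : Fin n => C) (fun _ y => x^y.length)]
      rw [Finset.prod_const, Finset.card_univ, Fintype.card_fin]
    have e2 : ∀ f : Fin n → List B, (∏ i, x^((f i).length)) =
        x^((List.ofFn f).flatten.length) := by
      intro f
      rw [Finset.prod_pow_eq_pow_sum, List.length_flatten, List.map_ofFn, List.sum_ofFn]
      rfl
    rw [e1, Finset.sum_congr rfl (fun f _ => e2 f)]
    -- transport along injective map f ↦ (ofFn f).flatten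
    have hinj : Set.InjOn (fun f : Fin n → List B => (List.ofFn f).flatten)
        ↑(Fintype.piFinset (fun _ : Fin n => C)) := by
      intro f hf g hg hfg
      have hf' : ∀ z ∈ List.ofFn f, z ∈ C := by
        intro z hz
        obtain ⟨i, rfl⟩ := List.mem_ofFn.mp hz
        exact Fintype.mem_piFinset.mp hf i
      have hg' : ∀ z ∈ List.ofFn g, z ∈ C := by
        intro z hz
        obtain ⟨i, rfl⟩ := List.mem_ofFn.mp hz
        exact Fintype.mem_piFinset.mp hg i
      exact List.ofFn_injective (hcode _ _ hf' hg' hfg)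
    have hinj' : ∀ f ∈ Fintype.piFinset (fun _ : Fin n => C), ∀ g ∈ Fintype.piFinset (fun _ : Fin n => C),
        (List.ofFn f).flatten = (List.ofFn g).flatten → f = g := by
      intro f hf g hg hfg
      exact hinj hf hg hfg
    rw [(Finset.sum_image (f := fun W : List B => x ^ W.length) hinj').symm]
    have hsub : (Fintype.piFinset (fun _ : Fin n => C)).image
        (fun f : Fin n → List B => (List.ofFn f).flatten) ⊆
        (Finset.range (n * Lc + 1)).biUnion (Wn B) := by
      intro W hW
      obtain ⟨f, hf, rfl⟩ := Finset.mem_image.mp hW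
      refine Finset.mem_biUnion.mpr ⟨(List.ofFn f).flatten.length, ?_, mem_Wn.mpr rfl⟩
      rw [Finset.mem_range, List.length_flatten, List.map_ofFn, List.sum_ofFn]
      have : ∀ i : Fin n, (f i).length ≤ Lc := fun i =>
        Finset.le_sup (Fintype.mem_piFinset.mp hf i)
      calc ∑ i : Fin n, (List.length ∘ f) i ≤ ∑ _i : Fin n, Lc :=
            Finset.sum_le_sum (fun i _ => this i)
        _ = n * Lc := by simp [mul_comm]
        _ < n * Lc + 1 := Nat.lt_succ_self _
    have hmono := Finset.sum_le_sum_of_subset_of_nonneg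
      (f := fun W : List B => x ^ W.length) hsub (fun W _ _ => pow_nonneg hx0.le _)
    refine le_trans hmono ?_
    have hdisj : ∀ j₁ ∈ (Finset.range (n * Lc + 1) : Finset ℕ), ∀ j₂ ∈ Finset.range (n * Lc + 1),
        j₁ ≠ j₂ → Disjoint (Wn B j₁) (Wn B j₂) := by
      intro j₁ _ j₂ _ hne
      rw [Finset.disjoint_left]
      intro W h1 h2
      exact hne ((mem_Wn.mp h1).symm.trans (mem_Wn.mp h2))
    rw [Finset.sum_biUnion hdisj]
    have : ∀ j ∈ Finset.range (n * Lc + 1), (∑ W ∈ Wn B j, x^W.length) = 1 := by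
      intro j _
      rw [sum_Wn_pow, hkx, one_pow]
    rw [Finset.sum_congr rfl this, Finset.sum_const, Finset.card_range, nsmul_eq_mul, mul_one]
    push_cast
    linarith
  -- conclude S ≤ 1
  by_contra hS
  push_neg at hS
  set ε := S - 1 with hεdef
  have hε : 0 < ε := by linarith
  have quad : ∀ n : ℕ, 1 + (n:ℚ) * ε + ((n:ℚ) * ((n:ℚ) - 1))/2 * ε^2 ≤ (1 + ε)^n := by
    intro n
    induction n with
    | zero => norm_num
    | succ m ih =>
      have hm : (0:ℚ) ≤ (m:ℚ) * ((m:ℚ) - 1) := by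
        rcases Nat.eq_zero_or_pos m with h | h
        · subst h; norm_num
        · have : (1:ℚ) ≤ (m:ℚ) := by exact_mod_cast h
          nlinarith
      have hcube : 0 ≤ (m:ℚ) * ((m:ℚ) - 1) / 2 * ε^3 := by
        apply mul_nonneg (by linarith) (by positivity)
      have h1 : (1 + ε)^(m+1) = (1+ε)^m * (1+ε) := by ring
      have h2 : (1 + (m:ℚ) * ε + ((m:ℚ) * ((m:ℚ) - 1))/2 * ε^2) * (1+ε) ≤ (1+ε)^m * (1+ε) := by
        apply mul_le_mul_of_nonneg_right ih (by linarith)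
      have h3 : (1 + (m:ℚ) * ε + ((m:ℚ) * ((m:ℚ) - 1))/2 * ε^2) * (1+ε)
          = 1 + ((m:ℚ)+1) * ε + (((m:ℚ)+1) * (((m:ℚ)+1) - 1))/2 * ε^2
            + (m:ℚ) * ((m:ℚ) - 1) / 2 * ε^3 := by ring
      rw [h1]
      push_cast
      linarith [h2, h3.symm.le, hcube, h3.le]
  obtain ⟨n, hn⟩ := exists_nat_ge ((2 * ((Lc:ℚ) + 1))/ε^2 + 1)
  have hn1 : (1:ℚ) ≤ n := by
    have : (0:ℚ) ≤ (2 * ((Lc:ℚ) + 1))/ε^2 := by positivity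
    linarith
  have hquad := quad n
  have hSn : S^n = (1+ε)^n := by rw [hεdef]; ring_nf
  have hkey := key n
  rw [hSn] at hkey
  -- n(n-1)/2 ε² ≥ n(Lc+1) since n - 1 ≥ 2(Lc+1)/ε²
  have harith : ∀ eps LQ nQ : ℚ, 0 < eps → 1 ≤ nQ → 2*(LQ+1)/eps^2 + 1 ≤ nQ →
      nQ*LQ + 1 < 1 + nQ*eps + nQ*(nQ-1)/2*eps^2 := by
    intro eps LQ nQ heps hn1' hn'
    have h3 : 2*(LQ+1)/eps^2 ≤ nQ - 1 := by linarith
    have h4 : 2*(LQ+1) ≤ (nQ - 1) * eps^2 := by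
      rw [div_le_iff₀ (by positivity)] at h3
      linarith
    have hn0 : (0:ℚ) < nQ := by linarith
    have h5 : nQ * (2*(LQ+1)) ≤ nQ * ((nQ-1) * eps^2) :=
      mul_le_mul_of_nonneg_left h4 hn0.le
    have h7 : (0:ℚ) < nQ * eps := mul_pos hn0 heps
    nlinarith [h5, h7]
  have hstep := harith ε (Lc:ℚ) (n:ℚ) hε hn1 hn
  linarith


lemma pow_sum_eq {B : Type*} [Fintype B] [DecidableEq B] (x : ℚ) (C : Finset (List B)) (n : ℕ) :
    (∑ y ∈ C, x ^ y.length)^n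
      = ∑ f ∈ Fintype.piFinset (fun _ : Fin n => C), x ^ (List.ofFn f).flatten.length := by
  have e1 : (∑ y ∈ C, x ^ y.length)^n
      = ∑ f ∈ Fintype.piFinset (fun _ : Fin n => C), ∏ i, x^((f i).length) := by
    rw [← Finset.prod_univ_sum (fun _ : Fin n => C) (fun _ y => x^y.length)]
    rw [Finset.prod_const, Finset.card_univ, Fintype.card_fin]
  rw [e1]
  apply Finset.sum_congr rfl
  intro f _
  rw [Finset.prod_pow_eq_pow_sum, List.length_flatten, List.map_ofFn, List.sum_ofFn]
  rfl

lemma disj_helper (m K : ℕ) (hm : K < m) (t₁ t₂ : ℕ) (h : t₁ < t₂) :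
    Disjoint (Finset.Icc (m*(t₁+1) - K) (m*(t₁+1))) (Finset.Icc (m*(t₂+1) - K) (m*(t₂+1))) := by
  rw [Finset.disjoint_left]
  intro j h1 h2
  simp only [Finset.mem_Icc] at h1 h2
  have e2 : m*(t₁+1) + m ≤ m*(t₂+1) := by
    calc m*(t₁+1) + m = m*(t₁+2) := by ring
      _ ≤ m*(t₂+1) := Nat.mul_le_mul_left m (by omega)
  generalize hA : m*(t₁+1) = a at h1 e2
  generalize hB : m*(t₂+1) = bb at h2 e2
  omega

end Count

section Main

/-- β is nonerasing. -/
lemma beta_ne_nil {A B : Type*}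
    (β : B → List A)
    (Y : Finset (List B))
    (X : Set (List A)) (hX : X = (fun l : List B => (l.map β).flatten) '' ↑Y)
    (hXcode : ∀ l1 l2 : List (List A), (∀ z ∈ l1, z ∈ X) → (∀ z ∈ l2, z ∈ X) →
      l1.flatten = l2.flatten → l1 = l2)
    (hYcomplete : ∀ t : List B, ∃ u v : List B, u ++ t ++ v ∈ Xstar (↑Y : Set (List B)))
    (bb : B) : β bb ≠ [] := by
  classical
  intro hnil
  have hXnil : ([] : List A) ∉ X := by
    intro h
    have h2 := hXcode [[]] [] ?_ (by simp) (by simp)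
    · simp at h2
    · intro z hz
      simp only [List.mem_singleton] at hz
      rw [hz]; exact h
  set L := Y.sup List.length with hL
  obtain ⟨a, d, hm⟩ := hYcomplete (List.replicate (2*L+1) bb)
  obtain ⟨l, hlY, hlflat⟩ := hm
  have hlen : ∀ z ∈ l, z.length ≤ L := fun z hz => Finset.le_sup (hlY z hz)
  obtain ⟨s, l', p', hinf, hWeq, hsL, hpL⟩ := cut l hlen a _ d hlflat (by simp)
  have hfl : 1 ≤ l'.flatten.length := by
    have := congrArg List.length hWeq
    simp only [List.length_append, List.length_replicate] at this
    omega
  cases l' with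
  | nil => simp at hfl
  | cons y t =>
    have hyY : y ∈ Y := hlY y (hinf.subset (List.mem_cons_self))
    have hyrep : ∀ a' ∈ y, a' = bb := by
      intro a' ha'
      have h1 : a' ∈ (y :: t).flatten := by
        simp only [List.flatten_cons, List.mem_append]
        exact Or.inl ha'
      have h2 : a' ∈ List.replicate (2*L+1) bb := by
        rw [hWeq]
        simp only [List.mem_append]
        exact Or.inl (Or.inr h1)
      exact List.eq_of_mem_replicate h2
    have hbfy : ((y.map β).flatten : List A) = [] := by
      rw [List.flatten_eq_nil_iff]
      intro z hz
      obtain ⟨a', ha', rfl⟩ := List.mem_map.mp hz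
      rw [hyrep a' ha', hnil]
    exact hXnil (hbfy ▸ (hX ▸ ⟨y, hyY, rfl⟩ : ((y.map β).flatten : List A) ∈ X))

end Main


section NoBad

lemma no_bad_pair {A B : Type*}
    (β : B → List A)
    (Y : Finset (List B)) (hletters : ∀ bb : B, ∃ y ∈ Y, bb ∈ y)
    (X : Set (List A)) (hX : X = (fun l : List B => (l.map β).flatten) '' ↑Y)
    (htrim : Set.InjOn (fun l : List B => (l.map β).flatten) ↑Y)
    (hXcode : ∀ l1 l2 : List (List A), (∀ z ∈ l1, z ∈ X) → (∀ z ∈ l2, z ∈ X) →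
      l1.flatten = l2.flatten → l1 = l2)
    (hYcomplete : ∀ t : List B, ∃ u v : List B, u ++ t ++ v ∈ Xstar (↑Y : Set (List B)))
    (b c : B) (u₁ v₁ : List B) (hbc : b ≠ c)
    (himg : (((b :: u₁) : List B).map β).flatten = (((c :: v₁) : List B).map β).flatten) :
    False := by
  classical
  set bf : List B → List A := fun t => (t.map β).flatten with hbf
  have bf_append : ∀ s t : List B, bf (s ++ t) = bf s ++ bf t := by
    intro s t; simp [hbf]
  have hXnil : ([] : List A) ∉ X := by
    intro h
    have h2 := hXcode [[]] [] ?_ (by simp) (by simp)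
    · simp at h2
    · intro z hz
      simp only [List.mem_singleton] at hz
      rw [hz]; exact h
  have hYnil : ([] : List B) ∉ Y := by
    intro h
    exact hXnil (hX ▸ ⟨[], h, rfl⟩)
  have hbfX : ∀ y ∈ Y, bf y ∈ X := by
    intro y hy; rw [hX]; exact ⟨y, hy, rfl⟩
  -- injectivity of bf on Y-lists
  have lists_inj : ∀ l l' : List (List B), (∀ s ∈ l, s ∈ Y) → (∀ s ∈ l', s ∈ Y) →
      bf l.flatten = bf l'.flatten → l = l' := by
    intro l l' hl hl' he
    have h1 : (l.map bf).flatten = (l'.map bf).flatten := by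
      have e1 := bf_flatten β l
      have e2 := bf_flatten β l'
      rw [hbf]
      rw [← e1, ← e2]
      exact he
    have h2 := hXcode (l.map bf) (l'.map bf) ?_ ?_ h1
    · exact map_injOn_list bf (fun s => s ∈ Y)
        (fun s hs t ht hst => htrim (by exact_mod_cast hs) (by exact_mod_cast ht) hst)
        l l' hl hl' h2
    · intro z hz; obtain ⟨y, hy, rfl⟩ := List.mem_map.mp hz; exact hbfX y (hl y hy)
    · intro z hz; obtain ⟨y, hy, rfl⟩ := List.mem_map.mp hz; exact hbfX y (hl' y hy)
  set u : List B := b :: u₁ with hu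
  set v : List B := c :: v₁ with hv
  have himg' : bf u = bf v := himg
  obtain ⟨p, q, hpq⟩ := hYcomplete u
  obtain ⟨ys₀, hys₀Y', hys₀flat⟩ := hpq
  have hys₀Y : ∀ s ∈ ys₀, s ∈ Y := fun s hs => hys₀Y' s hs
  set w : List B := p ++ v ++ q with hw
  have hbfw : bf w = bf ys₀.flatten := by
    rw [hys₀flat, hw]
    rw [bf_append, bf_append, bf_append, bf_append, himg']
  have hwY : ∀ ys : List (List B), (∀ s ∈ ys, s ∈ Y) → ys.flatten ≠ w := by
    intro ys hys hflat
    have h0 := lists_inj ys ys₀ hys hys₀Y (by rw [hflat, hbfw])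
    rw [h0, hys₀flat] at hflat
    have h2 : u = v := List.append_cancel_left (List.append_cancel_right hflat)
    rw [hu, hv] at h2
    exact hbc (by injection h2)
  have hwnotY : w ∉ Y := fun h => hwY [w] (by simpa using h) (by simp)
  have hwne : w ≠ ([] : List B) := by rw [hw, hv]; simp
  -- the expansion map
  set e : List (List B) → List (List B) :=
    fun l => l.flatMap (fun z => if z = w then ys₀ else [z]) with he
  have e_nil : e [] = [] := rfl
  have e_cons : ∀ (z : List B) (t : List (List B)),
      e (z :: t) = (if z = w then ys₀ else [z]) ++ e t := by
    intro z t; simp [he]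
  have eY : ∀ l, (∀ z ∈ l, z ∈ Y ∨ z = w) → ∀ s ∈ e l, s ∈ Y := by
    intro l
    induction l with
    | nil => simp [e_nil]
    | cons z t ih =>
      intro hQ s hs
      rw [e_cons] at hs
      rcases List.mem_append.mp hs with h | h
      · by_cases hz : z = w
        · rw [if_pos hz] at h; exact hys₀Y s h
        · rw [if_neg hz] at h
          simp only [List.mem_singleton] at h
          rcases hQ z (List.mem_cons_self) with h' | h'
          · exact h ▸ h'
          · exact absurd h' hz
      · exact ih (fun z' hz' => hQ z' (List.mem_cons_of_mem _ hz')) s h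
  have e_bf : ∀ l, bf ((e l).flatten) = bf (l.flatten) := by
    intro l
    induction l with
    | nil => simp [e_nil]
    | cons z t ih =>
      rw [e_cons, List.flatten_append, List.flatten_cons, bf_append, bf_append, ih]
      congr 1
      by_cases hz : z = w
      · rw [if_pos hz, hz]; exact hbfw.symm
      · rw [if_neg hz]; simp
  have hQnil : ∀ l : List (List B), (∀ z ∈ l, z ∈ Y ∨ z = w) → l.flatten = [] → l = [] := by
    intro l
    induction l with
    | nil => intros; rfl
    | cons z t ih =>
      intro hQ hf
      simp only [List.flatten_cons, List.append_eq_nil_iff] at hf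
      exfalso
      rcases hQ z (List.mem_cons_self) with h | h
      · exact hYnil (hf.1 ▸ h)
      · exact hwne (by rw [← h]; exact hf.1)
  have FD : ∀ l : List (List B), (∀ z ∈ l, z ∈ Y ∨ z = w) → w ∈ l →
      ∃ G R₁ R₂, l.flatten = (G ++ p) ++ c :: R₁ ∧ (e l).flatten = (G ++ p) ++ b :: R₂ := by
    intro l
    induction l with
    | nil => simp
    | cons z t ih =>
      intro hQ hwl
      by_cases hz : z = w
      · refine ⟨[], v₁ ++ (q ++ t.flatten), u₁ ++ (q ++ (e t).flatten), ?_, ?_⟩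
        · rw [List.flatten_cons, hz, hw, hv]
          simp [List.append_assoc]
        · rw [e_cons, if_pos hz, List.flatten_append, hys₀flat, hu]
          simp [List.append_assoc]
      · have hwt : w ∈ t := by
          rcases List.mem_cons.mp hwl with h | h
          · exact absurd h.symm hz
          · exact h
        obtain ⟨G, R₁, R₂, h1, h2⟩ := ih (fun z' hz' => hQ z' (List.mem_cons_of_mem _ hz')) hwt
        refine ⟨z ++ G, R₁, R₂, ?_, ?_⟩
        · rw [List.flatten_cons, h1]; simp [List.append_assoc]
        · rw [e_cons, if_neg hz, List.flatten_append, h2]; simp [List.append_assoc]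
  have e_noW : ∀ l : List (List B), w ∉ l → e l = l := by
    intro l
    induction l with
    | nil => intro _; rfl
    | cons z t ih =>
      intro h
      have hz : z ≠ w := by rintro rfl; exact h (List.mem_cons_self)
      rw [e_cons, if_neg hz, ih (fun ht => h (List.mem_cons_of_mem _ ht))]
      rfl
  have noMix : ∀ (r₁ : List (List B)) (z₂ : List B) (r₂ : List (List B)),
      (∀ z ∈ r₁, z ∈ Y ∨ z = w) → (∀ z ∈ r₂, z ∈ Y ∨ z = w) → z₂ ∈ Y →
      (w :: r₁).flatten = (z₂ :: r₂).flatten →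
      e (w :: r₁) = e (z₂ :: r₂) → False := by
    intro r₁ z₂ r₂ hQ1 hQ2 hz₂Y hf heq
    have hz₂w : z₂ ≠ w := fun h => hwnotY (h ▸ hz₂Y)
    have hT1 : (w :: r₁).flatten = p ++ c :: (v₁ ++ (q ++ r₁.flatten)) := by
      rw [List.flatten_cons, hw, hv]; simp [List.append_assoc]
    have hW1 : (e (w :: r₁)).flatten = p ++ b :: (u₁ ++ (q ++ (e r₁).flatten)) := by
      rw [e_cons, if_pos rfl, List.flatten_append, hys₀flat, hu]; simp [List.append_assoc]
    have hT2 : (w :: r₁).flatten = z₂ ++ r₂.flatten := by rw [hf, List.flatten_cons]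
    have hW2 : (e (w :: r₁)).flatten = z₂ ++ (e r₂).flatten := by
      rw [heq, e_cons, if_neg hz₂w, List.flatten_append]; simp
    by_cases hwr : w ∈ r₂
    · obtain ⟨G, R₁, R₂, hg1, hg2⟩ := FD r₂ hQ2 hwr
      have hT2' : (w :: r₁).flatten = (z₂ ++ (G ++ p)) ++ c :: R₁ := by
        rw [hT2, hg1]; simp [List.append_assoc]
      have hW2' : (e (w :: r₁)).flatten = (z₂ ++ (G ++ p)) ++ b :: R₂ := by
        rw [hW2, hg2]; simp [List.append_assoc]
      have hT1' : (w :: r₁).flatten = p ++ c :: (v₁ ++ (q ++ r₁.flatten)) := hT1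
      have hlen := first_diff hbc p (z₂ ++ (G ++ p)) _ _
        (v₁ ++ (q ++ r₁.flatten)) R₁ (u₁ ++ (q ++ (e r₁).flatten)) R₂ hT1' hT2' hW1 hW2'
      simp only [List.length_append] at hlen
      have hz0 : z₂.length = 0 := by omega
      exact hYnil (List.length_eq_zero_iff.mp hz0 ▸ hz₂Y)
    · rw [e_noW r₂ hwr] at hW2
      have h3 := hT1.symm.trans (hT2.trans (hW2.symm.trans hW1))
      have h4 := List.append_cancel_left h3
      injection h4 with h5 _
      exact hbc h5.symm
  have code4 : ∀ l₁ : List (List B), (∀ z ∈ l₁, z ∈ Y ∨ z = w) →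
      ∀ l₂ : List (List B), (∀ z ∈ l₂, z ∈ Y ∨ z = w) →
      l₁.flatten = l₂.flatten → l₁ = l₂ := by
    intro l₁
    induction l₁ with
    | nil =>
      intro _ l₂ hQ2 hf
      exact (hQnil l₂ hQ2 (by simpa using hf.symm)).symm
    | cons z₁ r₁ ih =>
      intro hQ1 l₂ hQ2 hf
      have hQr₁ : ∀ z ∈ r₁, z ∈ Y ∨ z = w := fun z hz => hQ1 z (List.mem_cons_of_mem _ hz)
      cases l₂ with
      | nil =>
        exfalso
        have := hQnil (z₁ :: r₁) hQ1 (by simpa using hf)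
        simp at this
      | cons z₂ r₂ =>
        have hQr₂ : ∀ z ∈ r₂, z ∈ Y ∨ z = w := fun z hz => hQ2 z (List.mem_cons_of_mem _ hz)
        have heq : e (z₁ :: r₁) = e (z₂ :: r₂) := by
          apply lists_inj _ _ (eY _ hQ1) (eY _ hQ2)
          rw [e_bf, e_bf, hf]
        by_cases h₁ : z₁ = w <;> by_cases h₂ : z₂ = w
        · subst h₁; subst h₂
          have hf' : r₁.flatten = r₂.flatten := by
            simp only [List.flatten_cons] at hf
            exact List.append_cancel_left hf
          rw [ih hQr₁ r₂ hQr₂ hf']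
        · subst h₁
          have hz₂Y : z₂ ∈ Y := (hQ2 z₂ (List.mem_cons_self)).resolve_right h₂
          exact (noMix r₁ z₂ r₂ hQr₁ hQr₂ hz₂Y hf heq).elim
        · subst h₂
          have hz₁Y : z₁ ∈ Y := (hQ1 z₁ (List.mem_cons_self)).resolve_right h₁
          exact (noMix r₂ z₁ r₁ hQr₂ hQr₁ hz₁Y hf.symm heq.symm).elim
        · rw [e_cons, if_neg h₁, e_cons, if_neg h₂] at heq
          simp only [List.singleton_append] at heq
          injection heq with hz he'
          subst hz
          have hf' : r₁.flatten = r₂.flatten := by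
            simp only [List.flatten_cons] at hf
            exact List.append_cancel_left hf
          rw [ih hQr₁ r₂ hQr₂ hf']
  -- counting contradiction
  -- B is finite
  have hBfin : Finite B := by
    have hmem : ∀ bb : B, bb ∈ Y.biUnion (fun y => y.toFinset) := by
      intro bb
      obtain ⟨y, hy, hby⟩ := hletters bb
      exact Finset.mem_biUnion.mpr ⟨y, hy, List.mem_toFinset.mpr hby⟩
    exact Finite.of_injective
      (fun bb => (⟨bb, hmem bb⟩ : {z // z ∈ Y.biUnion (fun y => y.toFinset)}))
      (fun a1 a2 h => by simpa using congrArg Subtype.val h)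
  haveI : Fintype B := Fintype.ofFinite B
  haveI : Nonempty B := ⟨b⟩
  have hk1 : 1 ≤ Fintype.card B := Fintype.card_pos
  have hkQ : (0:ℚ) < (Fintype.card B : ℚ) := by exact_mod_cast hk1
  have hQins : ∀ (l : List (List B)), (∀ z ∈ l, z ∈ insert w Y) → ∀ z ∈ l, z ∈ Y ∨ z = w := by
    intro l hl z hz
    rcases Finset.mem_insert.mp (hl z hz) with h | h
    · exact Or.inr h
    · exact Or.inl h
  have hinsnil : ∀ z ∈ insert w Y, z ≠ ([] : List B) := by
    intro z hz
    rcases Finset.mem_insert.mp hz with h | h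
    · exact h ▸ hwne
    · exact fun h' => hYnil (h' ▸ h)
  have hmc := mcmillan (insert w Y) hinsnil
    (fun l₁ l₂ hl₁ hl₂ hf => code4 l₁ (hQins l₁ hl₁) l₂ (hQins l₂ hl₂) hf)
  rw [Finset.sum_insert hwnotY] at hmc
  set x : ℚ := ((Fintype.card B : ℚ))⁻¹ with hxdef
  have hx0 : (0:ℚ) < x := by positivity
  have hx1 : x ≤ 1 := by
    rw [hxdef]
    exact inv_le_one_of_one_le₀ (by exact_mod_cast hk1)
  set SY : ℚ := ∑ y ∈ Y, x ^ y.length with hSY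
  have hSYnonneg : 0 ≤ SY := by
    rw [hSY]
    exact Finset.sum_nonneg (fun y _ => pow_nonneg hx0.le _)
  have hεpos : (0:ℚ) < x ^ w.length := pow_pos hx0 _
  have hSYle : SY ≤ 1 - x ^ w.length := by linarith [hmc]
  set L := Y.sup List.length with hLY
  have hlenY : ∀ z ∈ Y, z.length ≤ L := fun z hz => Finset.le_sup hz
  set Mset : ℕ → Finset (List B) := fun j => (Wn B j).filter
    (fun W => ∃ l : List (List B), (∀ z ∈ l, z ∈ Y) ∧ l.flatten = W) with hMset
  set WLe : Finset (List B) := (Finset.range (L+1)).biUnion (Wn B) with hWLe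
  have hWLemem : ∀ s : List B, s.length ≤ L → s ∈ WLe := by
    intro s hs
    rw [hWLe]
    exact Finset.mem_biUnion.mpr ⟨s.length, Finset.mem_range.mpr (by omega), mem_Wn.mpr rfl⟩
  have hWLepos : 0 < WLe.card := Finset.card_pos.mpr ⟨[], hWLemem [] (by simp)⟩
  set DL : ℕ := WLe.card * WLe.card with hDL
  have hDLpos : 0 < DL := Nat.mul_pos hWLepos hWLepos
  have hDLQ : (0:ℚ) < (DL:ℚ) := by exact_mod_cast hDLpos
  -- completeness lower bound for the number of Y*-words
  have hI1 : ∀ n : ℕ, 2*L+1 ≤ n →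
      ((Fintype.card B : ℚ))^n ≤ (DL:ℚ) * ∑ j ∈ Finset.Icc (n - 2*L) n, ((Mset j).card : ℚ) := by
    intro n hn
    have hex : ∀ W : List B, W.length = n → ∃ t : List B × List B × List B,
        (W = t.1 ++ t.2.2 ++ t.2.1 ∧ t.1.length ≤ L ∧ t.2.1.length ≤ L) ∧
        ∃ l : List (List B), (∀ z ∈ l, z ∈ Y) ∧ l.flatten = t.2.2 := by
      intro W hWl
      obtain ⟨a, d, hm⟩ := hYcomplete W
      obtain ⟨lst, hlstY, hlstflat⟩ := hm
      have hlen' : ∀ z ∈ lst, z.length ≤ L := fun z hz => hlenY z (hlstY z hz)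
      obtain ⟨s, l', p', hinf, hWeq, hsL, hpL⟩ := cut lst hlen' a W d hlstflat (by omega)
      exact ⟨(s, p', l'.flatten), ⟨hWeq, hsL, hpL⟩,
        ⟨l', fun z hz => hlstY z (hinf.subset hz), rfl⟩⟩
    choose F hF1 hF2 using hex
    set f : List B → List B × List B × List B :=
      fun W => if h : W.length = n then F W h else ([], [], []) with hf
    have hmain : (Wn B n).card ≤
        (WLe ×ˢ (WLe ×ˢ (Finset.Icc (n-2*L) n).biUnion Mset)).card := by
      apply Finset.card_le_card_of_injOn f
      · intro W hW
        have h := mem_Wn.mp hW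
        rw [hf]
        simp only [dif_pos h]
        obtain ⟨hWeq, hsL, hpL⟩ := hF1 W h
        obtain ⟨l, hlY, hlf⟩ := hF2 W h
        refine Finset.mem_product.mpr ⟨hWLemem _ hsL, Finset.mem_product.mpr
          ⟨hWLemem _ hpL, ?_⟩⟩
        refine Finset.mem_biUnion.mpr ⟨(F W h).2.2.length, ?_, ?_⟩
        · rw [Finset.mem_Icc]
          have hWL := congrArg List.length hWeq
          simp only [List.length_append] at hWL
          omega
        · simp only [hMset, Finset.mem_filter]
          exact ⟨mem_Wn.mpr rfl, l, hlY, hlf⟩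
      · intro W1 h1 W2 h2 hfe
        have e1 := mem_Wn.mp (Finset.mem_coe.mp h1)
        have e2 := mem_Wn.mp (Finset.mem_coe.mp h2)
        have q1 := (hF1 W1 e1).1
        have q2 := (hF1 W2 e2).1
        rw [hf] at hfe
        simp only [dif_pos e1, dif_pos e2] at hfe
        rw [q1, hfe, ← q2]
    have hcard2 : (WLe ×ˢ (WLe ×ˢ (Finset.Icc (n-2*L) n).biUnion Mset)).card ≤
        DL * ∑ j ∈ Finset.Icc (n-2*L) n, (Mset j).card := by
      rw [Finset.card_product, Finset.card_product, hDL]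
      have hb := Finset.card_biUnion_le (s := Finset.Icc (n-2*L) n) (t := Mset)
      calc WLe.card * (WLe.card * ((Finset.Icc (n-2*L) n).biUnion Mset).card)
          ≤ WLe.card * (WLe.card * ∑ j ∈ Finset.Icc (n-2*L) n, (Mset j).card) :=
            Nat.mul_le_mul_left _ (Nat.mul_le_mul_left _ hb)
        _ = WLe.card * WLe.card * ∑ j ∈ Finset.Icc (n-2*L) n, (Mset j).card := by ring
    calc ((Fintype.card B : ℚ))^n = ((Wn B n).card : ℚ) := by
          rw [card_Wn]; push_cast; ring
      _ ≤ ((WLe ×ˢ (WLe ×ˢ (Finset.Icc (n-2*L) n).biUnion Mset)).card : ℚ) := by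
          exact_mod_cast hmain
      _ ≤ ((DL * ∑ j ∈ Finset.Icc (n-2*L) n, (Mset j).card : ℕ) : ℚ) := by
          exact_mod_cast hcard2
      _ = (DL:ℚ) * ∑ j ∈ Finset.Icc (n-2*L) n, ((Mset j).card : ℚ) := by
          push_cast; ring
  -- per-window lower bound in ℚ
  have hI2 : ∀ n : ℕ, 2*L+1 ≤ n →
      (1:ℚ)/DL ≤ ∑ j ∈ Finset.Icc (n-2*L) n, ((Mset j).card : ℚ) * x^j := by
    intro n hn
    have h1 := hI1 n hn
    have hxk : x^n * ((Fintype.card B:ℚ))^n = 1 := by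
      rw [hxdef, ← mul_pow, inv_mul_cancel₀ hkQ.ne', one_pow]
    have hsum : ((Fintype.card B:ℚ))^n / DL ≤ ∑ j ∈ Finset.Icc (n-2*L) n, ((Mset j).card : ℚ) := by
      rw [div_le_iff₀ hDLQ]
      calc ((Fintype.card B:ℚ))^n ≤ (DL:ℚ) * ∑ j ∈ Finset.Icc (n-2*L) n, ((Mset j).card : ℚ) := h1
        _ = (∑ j ∈ Finset.Icc (n-2*L) n, ((Mset j).card : ℚ)) * DL := by ring
    have h4 : (1:ℚ)/DL ≤ x^n * ∑ j ∈ Finset.Icc (n-2*L) n, ((Mset j).card : ℚ) := by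
      calc (1:ℚ)/DL = x^n * (((Fintype.card B:ℚ))^n / DL) := by
            rw [← mul_div_assoc, hxk]
        _ ≤ x^n * ∑ j ∈ Finset.Icc (n-2*L) n, ((Mset j).card : ℚ) :=
            mul_le_mul_of_nonneg_left hsum (pow_nonneg hx0.le n)
    calc (1:ℚ)/DL ≤ x^n * ∑ j ∈ Finset.Icc (n-2*L) n, ((Mset j).card : ℚ) := h4
      _ = ∑ j ∈ Finset.Icc (n-2*L) n, ((Mset j).card : ℚ) * x^n := by
          rw [Finset.mul_sum]
          exact Finset.sum_congr rfl (fun j _ => mul_comm _ _)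
      _ ≤ ∑ j ∈ Finset.Icc (n-2*L) n, ((Mset j).card : ℚ) * x^j := by
          apply Finset.sum_le_sum
          intro j hj
          exact mul_le_mul_of_nonneg_left
            (pow_le_pow_of_le_one hx0.le hx1 (Finset.mem_Icc.mp hj).2) (Nat.cast_nonneg _)
  -- global upper bound from McMillan
  have hI3 : ∀ N : ℕ, ∑ j ∈ Finset.range (N+1), ((Mset j).card : ℚ) * x^j
      ≤ ((Fintype.card B:ℚ))^w.length := by
    intro N
    have hVdisj : ∀ j₁ ∈ Finset.range (N+1), ∀ j₂ ∈ Finset.range (N+1), j₁ ≠ j₂ →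
        Disjoint (Mset j₁) (Mset j₂) := by
      intro j₁ _ j₂ _ hne
      rw [Finset.disjoint_left]
      intro m h1 h2
      simp only [hMset, Finset.mem_filter] at h1 h2
      exact hne ((mem_Wn.mp h1.1).symm.trans (mem_Wn.mp h2.1))
    have hLHS : ∑ j ∈ Finset.range (N+1), ((Mset j).card : ℚ) * x^j
        = ∑ m ∈ (Finset.range (N+1)).biUnion Mset, x^m.length := by
      rw [Finset.sum_biUnion hVdisj]
      apply Finset.sum_congr rfl
      intro j _
      have hc : ∀ m ∈ Mset j, x^m.length = x^j := by
        intro m hm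
        simp only [hMset, Finset.mem_filter] at hm
        rw [mem_Wn.mp hm.1]
      rw [Finset.sum_congr rfl hc, Finset.sum_const, nsmul_eq_mul]
    rw [hLHS]
    have hexfac : ∀ m : List B, ∃ l : List (List B),
        (∃ l', (∀ z ∈ l', z ∈ Y) ∧ List.flatten l' = m) →
        ((∀ z ∈ l, z ∈ Y) ∧ l.flatten = m) := by
      intro m
      by_cases h : ∃ l', (∀ z ∈ l', z ∈ Y) ∧ List.flatten l' = m
      · exact ⟨h.choose, fun _ => h.choose_spec⟩
      · exact ⟨[], fun h' => absurd h' h⟩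
    choose fac hfac using hexfac
    have hfacV : ∀ m ∈ (Finset.range (N+1)).biUnion Mset,
        (∀ z ∈ fac m, z ∈ Y) ∧ (fac m).flatten = m := by
      intro m hm
      obtain ⟨j, _, hmj⟩ := Finset.mem_biUnion.mp hm
      simp only [hMset, Finset.mem_filter] at hmj
      exact hfac m hmj.2
    have hfacinj : ∀ m1 ∈ (Finset.range (N+1)).biUnion Mset,
        ∀ m2 ∈ (Finset.range (N+1)).biUnion Mset, fac m1 = fac m2 → m1 = m2 := by
      intro m1 h1 m2 h2 hee
      rw [← (hfacV m1 h1).2, ← (hfacV m2 h2).2, hee]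
    have hsum1 : ∑ m ∈ (Finset.range (N+1)).biUnion Mset, x^m.length
        = ∑ l ∈ ((Finset.range (N+1)).biUnion Mset).image fac, x^l.flatten.length := by
      rw [Finset.sum_image (f := fun l : List (List B) => x ^ l.flatten.length) hfacinj]
      apply Finset.sum_congr rfl
      intro m hm
      rw [(hfacV m hm).2]
    rw [hsum1]
    set TL : ℕ → Finset (List (List B)) := fun n' =>
      (Fintype.piFinset (fun _ : Fin n' => Y)).image List.ofFn with hTL
    have hsub : ((Finset.range (N+1)).biUnion Mset).image fac ⊆
        (Finset.range (N+1)).biUnion TL := by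
      intro l hl
      obtain ⟨m, hm, rfl⟩ := Finset.mem_image.mp hl
      obtain ⟨hfY, hff⟩ := hfacV m hm
      have hlen1 : (fac m).length ≤ N := by
        have h5 : (fac m).length ≤ (fac m).flatten.length :=
          length_le_length_flatten _ (fun z hz h0 => hYnil (h0 ▸ hfY z hz))
        have h6 : m.length ≤ N := by
          obtain ⟨j, hj, hmj⟩ := Finset.mem_biUnion.mp hm
          simp only [hMset, Finset.mem_filter] at hmj
          rw [mem_Wn.mp hmj.1]
          exact Nat.lt_succ_iff.mp (Finset.mem_range.mp hj)
        rw [hff] at h5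
        omega
      refine Finset.mem_biUnion.mpr ⟨(fac m).length, Finset.mem_range.mpr (by omega), ?_⟩
      simp only [hTL]
      refine Finset.mem_image.mpr ⟨fun i => (fac m).get i, ?_, List.ofFn_get _⟩
      rw [Fintype.mem_piFinset]
      intro i
      exact hfY _ (List.get_mem (fac m) i)
    have hmono := Finset.sum_le_sum_of_subset_of_nonneg
      (f := fun l : List (List B) => x ^ l.flatten.length) hsub
      (fun l _ _ => pow_nonneg hx0.le _)
    refine le_trans hmono ?_
    have hTLlen : ∀ (j : ℕ) (l : List (List B)), l ∈ TL j → l.length = j := by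
      intro j l hl
      simp only [hTL] at hl
      obtain ⟨f1, _, rfl⟩ := Finset.mem_image.mp hl
      simp
    have hTLdisj : ∀ j₁ ∈ Finset.range (N+1), ∀ j₂ ∈ Finset.range (N+1), j₁ ≠ j₂ →
        Disjoint (TL j₁) (TL j₂) := by
      intro j₁ _ j₂ _ hne
      rw [Finset.disjoint_left]
      intro l h1 h2
      exact hne ((hTLlen _ _ h1).symm.trans (hTLlen _ _ h2))
    rw [Finset.sum_biUnion hTLdisj]
    have hTLs : ∀ n' : ℕ, ∑ l ∈ TL n', x ^ l.flatten.length = SY^n' := by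
      intro n'
      simp only [hTL]
      have hio : ∀ f1 ∈ Fintype.piFinset (fun _ : Fin n' => Y),
          ∀ f2 ∈ Fintype.piFinset (fun _ : Fin n' => Y),
          List.ofFn f1 = List.ofFn f2 → f1 = f2 :=
        fun f1 _ f2 _ h => List.ofFn_injective h
      rw [Finset.sum_image (f := fun l : List (List B) => x ^ l.flatten.length) hio]
      rw [hSY, pow_sum_eq]
    rw [Finset.sum_congr rfl (fun n' _ => hTLs n')]
    have hgeoeq := geom_sum_mul SY (N+1)
    have hSYpow : 0 ≤ SY^(N+1) := pow_nonneg hSYnonneg _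
    have hgeo : (∑ n' ∈ Finset.range (N+1), SY^n') * (1 - SY) ≤ 1 := by
      have e : (∑ n' ∈ Finset.range (N+1), SY^n') * (1 - SY) = 1 - SY^(N+1) := by
        linear_combination -hgeoeq
      rw [e]
      linarith
    have hGnonneg : 0 ≤ ∑ n' ∈ Finset.range (N+1), SY^n' :=
      Finset.sum_nonneg (fun i _ => pow_nonneg hSYnonneg _)
    have h2m : (∑ n' ∈ Finset.range (N+1), SY^n') * (x ^ w.length) ≤ 1 := by
      calc (∑ n' ∈ Finset.range (N+1), SY^n') * (x ^ w.length)
          ≤ (∑ n' ∈ Finset.range (N+1), SY^n') * (1 - SY) :=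
            mul_le_mul_of_nonneg_left (by linarith) hGnonneg
        _ ≤ 1 := hgeo
    have hxw : (0:ℚ) < x ^ w.length := pow_pos hx0 _
    rw [← le_div_iff₀ hxw] at h2m
    refine le_trans h2m ?_
    rw [hxdef, inv_pow, one_div, inv_inv]
  -- final contradiction
  obtain ⟨M, hM⟩ := exists_nat_gt ((DL:ℚ) * ((Fintype.card B:ℚ))^w.length)
  set N := (2*L+2)*M with hN
  set I : ℕ → Finset ℕ := fun t =>
    Finset.Icc ((2*L+2)*(t+1) - 2*L) ((2*L+2)*(t+1)) with hIdef
  have hIbig : ∀ t : ℕ, 2*L+1 ≤ (2*L+2)*(t+1) := by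
    intro t
    calc 2*L+1 ≤ (2*L+2)*1 := by omega
      _ ≤ (2*L+2)*(t+1) := Nat.mul_le_mul_left _ (by omega)
  have hIdisj : ∀ t₁ ∈ Finset.range M, ∀ t₂ ∈ Finset.range M, t₁ ≠ t₂ →
      Disjoint (I t₁) (I t₂) := by
    intro t₁ _ t₂ _ hne
    simp only [hIdef]
    rcases Nat.lt_or_ge t₁ t₂ with h | h
    · exact disj_helper (2*L+2) (2*L) (by omega) t₁ t₂ h
    · exact (disj_helper (2*L+2) (2*L) (by omega) t₂ t₁
        (lt_of_le_of_ne h (fun hx => hne hx.symm))).symm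
  have hsubI : (Finset.range M).biUnion I ⊆ Finset.range (N+1) := by
    intro j hj
    obtain ⟨t, ht, hjt⟩ := Finset.mem_biUnion.mp hj
    simp only [hIdef, Finset.mem_Icc] at hjt
    have h2 : (2*L+2)*(t+1) ≤ N := by
      rw [hN]
      exact Nat.mul_le_mul_left _ (Nat.succ_le_of_lt (Finset.mem_range.mp ht))
    exact Finset.mem_range.mpr (Nat.lt_succ_of_le (le_trans hjt.2 h2))
  have hlow : (M:ℚ) * ((1:ℚ)/DL) ≤ ∑ j ∈ Finset.range (N+1), ((Mset j).card : ℚ) * x^j := by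
    calc (M:ℚ) * ((1:ℚ)/DL) = ∑ _t ∈ Finset.range M, (1:ℚ)/DL := by
          rw [Finset.sum_const, Finset.card_range, nsmul_eq_mul]
      _ ≤ ∑ t ∈ Finset.range M, ∑ j ∈ I t, ((Mset j).card : ℚ) * x^j := by
          apply Finset.sum_le_sum
          intro t _
          have := hI2 ((2*L+2)*(t+1)) (hIbig t)
          simpa only [hIdef] using this
      _ = ∑ j ∈ (Finset.range M).biUnion I, ((Mset j).card : ℚ) * x^j :=
          (Finset.sum_biUnion hIdisj).symm
      _ ≤ ∑ j ∈ Finset.range (N+1), ((Mset j).card : ℚ) * x^j :=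
          Finset.sum_le_sum_of_subset_of_nonneg hsubI
            (fun j _ _ => mul_nonneg (Nat.cast_nonneg _) (pow_nonneg hx0.le _))
  have hup := hI3 N
  have hfin : (M:ℚ) ≤ (DL:ℚ) * ((Fintype.card B:ℚ))^w.length := by
    have h7 := le_trans hlow hup
    rw [mul_one_div, div_le_iff₀ hDLQ] at h7
    nlinarith [h7]
  linarith [hM, hfin]


end NoBad


/-- if `X = Y ∘ Z` is a trim decomposition of a finite set `X`, `X` is a code
and `Y` is complete, then `Z` is a code. -/
theorem code_of_trim_decomposition {A B : Type*}
    (Z : Set (List A)) (β : B → List A)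
    (hβinj : Function.Injective β) (hβrange : Set.range β = Z)
    (Y : Finset (List B)) (hletters : ∀ b : B, ∃ y ∈ Y, b ∈ y)
    (X : Set (List A)) (hX : X = (fun l : List B => (l.map β).flatten) '' ↑Y)
    (htrim : Set.InjOn (fun l : List B => (l.map β).flatten) ↑Y)
    (hXcode : ∀ l1 l2 : List (List A), (∀ x ∈ l1, x ∈ X) → (∀ x ∈ l2, x ∈ X) →
      l1.flatten = l2.flatten → l1 = l2)
    (hYcomplete : ∀ w : List B, ∃ u v : List B,
      u ++ w ++ v ∈ Xstar (↑Y : Set (List B))) :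
    ∀ l1 l2 : List (List A), (∀ x ∈ l1, x ∈ Z) → (∀ x ∈ l2, x ∈ Z) →
      l1.flatten = l2.flatten → l1 = l2 := by
  classical
  intro l1 l2 h1 h2 hflat
  have hlift : ∀ l : List (List A), (∀ z ∈ l, z ∈ Z) → ∃ t : List B, l = t.map β := by
    intro l
    induction l with
    | nil => intro _; exact ⟨[], rfl⟩
    | cons z r ih =>
      intro h
      obtain ⟨t, ht⟩ := ih (fun s hs => h s (List.mem_cons_of_mem _ hs))
      have hz : z ∈ Z := h z (List.mem_cons_self)
      rw [← hβrange] at hz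
      obtain ⟨bb, hbb⟩ := hz
      exact ⟨bb :: t, by rw [List.map_cons, hbb, ht]⟩
  obtain ⟨t1, rfl⟩ := hlift l1 h1
  obtain ⟨t2, rfl⟩ := hlift l2 h2
  suffices h : t1 = t2 by rw [h]
  clear h1 h2
  induction t1 generalizing t2 with
  | nil =>
    cases t2 with
    | nil => rfl
    | cons cc r2 =>
      exfalso
      apply beta_ne_nil β Y X hX hXcode hYcomplete cc
      simp only [List.map_nil, List.flatten_nil, List.map_cons, List.flatten_cons] at hflat
      exact (List.append_eq_nil_iff.mp hflat.symm).1
  | cons bb r ih =>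
    cases t2 with
    | nil =>
      exfalso
      apply beta_ne_nil β Y X hX hXcode hYcomplete bb
      simp only [List.map_nil, List.flatten_nil, List.map_cons, List.flatten_cons] at hflat
      exact (List.append_eq_nil_iff.mp hflat).1
    | cons cc r2 =>
      by_cases hbc : bb = cc
      · subst hbc
        have hr : ((r.map β).flatten : List A) = (r2.map β).flatten := by
          simp only [List.map_cons, List.flatten_cons] at hflat
          exact List.append_cancel_left hflat
        rw [ih r2 hr]
      · exact (no_bad_pair β Y hletters X hX htrim hXcode hYcomplete
          bb cc r r2 hbc hflat).elim
end FGSub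
end
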